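/- arXiv:2202.08601 — 9 statements merged into one kernel-verified Lean document; each statement's English description precedes it below -/
import Mathlib

section
/- For every fixed-point-free involution τ of {0,…,5}, the 3-dimensional linear subspace P_τ = {x ∈ ℂ⁶ : x_i + x_{τ(i)} = 0 for all i} satisfies Σ_{k=0}^{5} x_k = 0 and Σ_{k=0}^{5} x_k³ = 0 identically on P_τ, so its projectivization is a plane contained in the Segre cubic Σ₃. Moreover there are exactly 15 fixed-point-free involutions of {0,…,5}, and the corresponding 15 planes are pairwise distinct. -/
open scoped BigOperators

/-- A fixed-point-free involution of `{0,…,5}`. -/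
def FPF (τ : Equiv.Perm (Fin 6)) : Prop :=
  (∀ i, τ (τ i) = i) ∧ ∀ i, τ i ≠ i

/-- The linear subspace `P_τ = {x ∈ ℂ⁶ : x i + x (τ i) = 0 for all i}`. -/
noncomputable def segrePlane (τ : Equiv.Perm (Fin 6)) : Submodule ℂ (Fin 6 → ℂ) where
  carrier := {x | ∀ i, x i + x (τ i) = 0}
  add_mem' := by
    intro a b ha hb i
    simp only [Pi.add_apply]
    linear_combination ha i + hb i
  zero_mem' := by intro i; simp
  smul_mem' := by
    intro c x hx i
    simp only [Pi.smul_apply, smul_eq_mul]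
    linear_combination c * hx i

set_option maxRecDepth 10000

lemma cardS_aux : ∀ τ : Equiv.Perm (Fin 6), ((∀ i, τ (τ i) = i) ∧ ∀ i, τ i ≠ i) →
    (Finset.univ.filter fun i => i < τ i).card = 3 := by decide

lemma finrank_segrePlane (τ : Equiv.Perm (Fin 6)) (hτ : FPF τ) :
    Module.finrank ℂ (segrePlane τ) = 3 := by
  obtain ⟨h1, h2⟩ := hτ
  set S : Finset (Fin 6) := Finset.univ.filter fun i => i < τ i with hSdef
  have hmemS : ∀ j : Fin 6, j < τ j → j ∈ S := fun j h =>
    Finset.mem_filter.mpr ⟨Finset.mem_univ j, h⟩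
  have hmemS' : ∀ j : Fin 6, ¬ j < τ j → τ j ∈ S := by
    intro j h
    refine Finset.mem_filter.mpr ⟨Finset.mem_univ _, ?_⟩
    rw [h1 j]
    exact lt_of_le_of_ne (not_lt.mp h) (h2 j)
  let L : segrePlane τ →ₗ[ℂ] (S → ℂ) :=
    { toFun := fun x i => x.1 i.1
      map_add' := fun a b => rfl
      map_smul' := fun c a => rfl }
  have hbij : Function.Bijective L := by
    constructor
    · intro a b hab
      apply Subtype.ext; funext i
      by_cases h : i < τ i
      · exact congrFun hab ⟨i, hmemS i h⟩
      · have ha : a.1 i = -a.1 (τ i) := by linear_combination a.2 i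
        have hb : b.1 i = -b.1 (τ i) := by linear_combination b.2 i
        have hab' : a.1 (τ i) = b.1 (τ i) := congrFun hab ⟨τ i, hmemS' i h⟩
        rw [ha, hb, hab']
    · intro y
      refine ⟨⟨fun j => if h : j < τ j then y ⟨j, hmemS j h⟩ else -y ⟨τ j, hmemS' j h⟩, ?_⟩, ?_⟩
      · intro i
        beta_reduce
        by_cases h : i < τ i
        · rw [dif_pos h, dif_neg (show ¬ τ i < τ (τ i) by rw [h1 i]; exact not_lt.mpr h.le)]
          have : y ⟨τ (τ i), hmemS' (τ i) (by rw [h1 i]; exact not_lt.mpr h.le)⟩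
              = y ⟨i, hmemS i h⟩ := congrArg y (Subtype.ext (h1 i))
          rw [this]; ring
        · rw [dif_neg h, dif_pos (show τ i < τ (τ i) by
            rw [h1 i]; exact lt_of_le_of_ne (not_lt.mp h) (h2 i))]
          exact neg_add_cancel _
      · funext i
        show (if h : (i:Fin 6) < τ i then _ else _) = y i
        rw [dif_pos (Finset.mem_filter.mp i.2).2]
  have := (LinearEquiv.ofBijective L hbij).finrank_eq
  rw [this, Module.finrank_fintype_fun_eq_card, Fintype.card_coe,
    cardS_aux τ ⟨h1, h2⟩]

/-- For every fixed-point-free involution `τ` of `{0,…,5}` the subspace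
`P_τ` is 3-dimensional and both `∑ x_k` and `∑ x_k³` vanish identically on it (so its
projectivization is a plane contained in the Segre cubic); moreover there are exactly
15 fixed-point-free involutions of `{0,…,5}`, and the corresponding 15 planes are
pairwise distinct. -/
theorem segre_planes_in_segre_cubic :
    (∀ τ : Equiv.Perm (Fin 6), FPF τ →
      Module.finrank ℂ (segrePlane τ) = 3 ∧
      ∀ x : Fin 6 → ℂ, x ∈ segrePlane τ →
        (∑ k, x k) = 0 ∧ (∑ k, (x k) ^ 3) = 0) ∧
    {τ : Equiv.Perm (Fin 6) | FPF τ}.ncard = 15 ∧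
    (∀ τ τ' : Equiv.Perm (Fin 6), FPF τ → FPF τ' → τ ≠ τ' →
      segrePlane τ ≠ segrePlane τ') := by
  refine ⟨?_, ?_, ?_⟩
  · intro τ hτ
    refine ⟨finrank_segrePlane τ hτ, ?_⟩
    intro x hx
    have hneg : ∀ k, x (τ k) = -x k := fun k => by linear_combination hx k
    constructor
    · have h3 : (2:ℂ) * ∑ k, x k = 0 := by
        rw [two_mul]
        nth_rewrite 2 [← Equiv.sum_comp τ x]
        rw [← Finset.sum_add_distrib]
        exact Finset.sum_eq_zero fun k _ => hx k
      exact (mul_eq_zero.mp h3).resolve_left two_ne_zero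
    · have h4 : ∑ k, (x k)^3 = ∑ k, (x (τ k))^3 :=
        (Equiv.sum_comp τ fun k => (x k)^3).symm
      have h5 : ∑ k, (x (τ k))^3 = -∑ k, (x k)^3 := by
        rw [← Finset.sum_neg_distrib]
        exact Finset.sum_congr rfl fun k _ => by rw [hneg k]; ring
      have h6 : (2:ℂ) * ∑ k, (x k)^3 = 0 := by linear_combination h4 + h5
      exact (mul_eq_zero.mp h6).resolve_left two_ne_zero
  · have hset : {τ : Equiv.Perm (Fin 6) | FPF τ}
        = ↑(Finset.univ.filter fun τ : Equiv.Perm (Fin 6) =>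
            ((∀ i, τ (τ i) = i) ∧ ∀ i, τ i ≠ i)) := by
      ext τ; simp [FPF]
    rw [hset, Set.ncard_coe_finset]
    decide
  · intro τ τ' hτ hτ' hne hplanes
    have : ∃ i, τ i ≠ τ' i := by
      by_contra h
      push_neg at h
      exact hne (Equiv.ext h)
    obtain ⟨i, hi⟩ := this
    classical
    let x : Fin 6 → ℂ := fun j => if j = i then 1 else if j = τ i then -1 else 0
    have hxmem : x ∈ segrePlane τ := by
      intro j
      show (if j = i then (1:ℂ) else if j = τ i then -1 else 0)
          + (if τ j = i then (1:ℂ) else if τ j = τ i then -1 else 0) = 0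
      split_ifs with h1 h2 h3 h4 h5 h6 h7 h8 <;> try ring
      · exact absurd (h2.trans h1.symm : τ j = j) (hτ.2 j)
      · exact absurd (by rw [h1] : τ j = τ i) h3
      · exact absurd (by rw [h4, hτ.1 i] : τ j = i) h5
      · exact absurd (by rw [h4, hτ.1 i] : τ j = i) h5
      · exact absurd (by rw [← h7, hτ.1 j] : j = τ i) h4
      · exact absurd (by have := congrArg τ h8; rwa [hτ.1 j, hτ.1 i] at this : j = i) h1
    rw [hplanes] at hxmem
    have hx := hxmem i
    have hx1 : x i = 1 := if_pos rfl
    have hx2 : x (τ' i) = 0 := by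
      show (if τ' i = i then (1:ℂ) else if τ' i = τ i then -1 else 0) = 0
      rw [if_neg (hτ'.2 i), if_neg (fun h => hi h.symm)]
    rw [hx1, hx2] at hx
    exact one_ne_zero (by linear_combination hx)
end

section
/- A point [x] ∈ Σ₃ is a singular point of Σ₃ if and only if there exist t ∈ ℂ ∖ {0} and a 3-element subset A ⊆ {0,…,5} such that x_k = t for k ∈ A and x_k = −t for k ∉ A. Consequently the singular locus of Σ₃ consists of exactly 10 points of P⁵, the S₆-orbit of [1:1:1:−1:−1:−1]. -/
open scoped BigOperators

/-- The vector `(1,1,1,-1,-1,-1)` in `ℂ⁶`. -/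
noncomputable def eps0 : Fin 6 → ℂ := fun k => if (k : ℕ) < 3 then 1 else -1

/-!
If all `x_k²` agree and `x ≠ 0`, then `x = t • ε_A` with `t = x_i ≠ 0` for some `i`, where
`ε_A` is the `±1`-vector equal to `1` exactly on `A`. Then `∑ x_k = t (2 #A - 6)` forces
`#A = 3`, while `∑ x_k³ = t³ ∑ ε_A = 0` is automatic. The points `[ε_A]` coincide only for `A`
and `Aᶜ`, so choosing `0 ∈ A` counts `C(5,2) = 10` of them, and `S₆` acts transitively on the
`3`-subsets.
-/

open Finset Pointwise

/-- By the Jacobian criterion, the singular points of `{∑ x_k = 0, ∑ x_k³ = 0} ⊆ ℙ(K^ι)`. -/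
def segreSingularLocus (ι K : Type*) [Fintype ι] [Field K] :
    Set (Projectivization K (ι → K)) :=
  {p | ∃ (x : ι → K) (hx : x ≠ 0), p = Projectivization.mk K x hx ∧
    (∑ k, x k) = 0 ∧ (∑ k, (x k) ^ 3) = 0 ∧ ∀ j k, (x j) ^ 2 = (x k) ^ 2}

variable {ι K : Type*} [DecidableEq ι]

noncomputable def signVector [CommRing K] (A : Finset ι) : ι → K :=
  fun k => if k ∈ A then 1 else -1

section CommRing

variable [CommRing K] (A : Finset ι)

lemma smul_signVector_apply (t : K) (k : ι) :
    (t • signVector A) k = if k ∈ A then t else -t := by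
  simp only [signVector, Pi.smul_apply, smul_eq_mul]
  split_ifs <;> simp

lemma signVector_apply_sq (k : ι) : signVector A k ^ 2 = (1 : K) := by
  unfold signVector; split_ifs <;> simp

lemma signVector_apply_pow_three (k : ι) : signVector A k ^ 3 = (signVector A k : K) := by
  unfold signVector; split_ifs <;> norm_num

lemma signVector_ne_zero [Nonempty ι] [Nontrivial K] : (signVector A : ι → K) ≠ 0 := by
  inhabit ι
  intro h
  have := congrFun h default
  unfold signVector at this; split_ifs at this <;> simp_all

lemma signVector_comp_perm (σ : Equiv.Perm ι) :
    (signVector A : ι → K) ∘ σ = signVector (σ⁻¹ • A) := by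
  ext k; simp [signVector, mem_inv_smul_finset_iff]

lemma signVector_injective [NeZero (2 : K)] :
    Function.Injective (signVector : Finset ι → ι → K) := by
  have h1 : (1 : K) ≠ -1 := fun h => two_ne_zero (α := K) (by linear_combination h)
  intro A B h
  ext k
  have := congrFun h k
  unfold signVector at this
  by_cases hA : k ∈ A <;> by_cases hB : k ∈ B <;> simp only [hA, hB, if_true, if_false] at this
  · exact iff_of_true hA hB
  · exact absurd this h1
  · exact absurd this.symm h1
  · exact iff_of_false hA hB

variable [Fintype ι]

lemma signVector_compl : signVector Aᶜ = -(signVector A : ι → K) := by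
  ext k; by_cases hk : k ∈ A <;> simp [signVector, hk]

lemma sum_signVector : ∑ k, signVector A k = (2 * #A - Fintype.card ι : K) := by
  have : ∀ k, (signVector A k : K) = 2 * (if k ∈ A then 1 else 0) - 1 := fun k => by
    unfold signVector; split_ifs <;> ring
  simp [this, sum_sub_distrib, mul_comm]

lemma sum_signVector_eq_zero_iff [CharZero K] :
    ∑ k, (signVector A k : K) = 0 ↔ 2 * #A = Fintype.card ι := by
  rw [sum_signVector, sub_eq_zero]
  norm_cast

lemma exists_eq_smul_signVector_of_sq_eq [NoZeroDivisors K] {x : ι → K} (hx : x ≠ 0)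
    (h : ∀ j k, x j ^ 2 = x k ^ 2) :
    ∃ t ≠ (0 : K), ∃ A : Finset ι, x = t • signVector A := by
  classical
  obtain ⟨i, hi : x i ≠ 0⟩ := Function.ne_iff.1 hx
  refine ⟨x i, hi, ({k | x k = x i} : Finset ι), funext fun k => ?_⟩
  rw [smul_signVector_apply]
  by_cases hk : x k = x i
  · simp [hk]
  · simpa [hk] using (sq_eq_sq_iff_eq_or_eq_neg.1 (h k i)).resolve_left hk

theorem sq_eq_sq_iff_exists_eq_smul_signVector [IsDomain K] [CharZero K] {x : ι → K}
    (hx : x ≠ 0) (hsum : ∑ k, x k = 0) :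
    (∀ j k, x j ^ 2 = x k ^ 2) ↔
      ∃ t ≠ (0 : K), ∃ A : Finset ι, 2 * #A = Fintype.card ι ∧ x = t • signVector A := by
  constructor
  · intro h
    obtain ⟨t, ht, A, rfl⟩ := exists_eq_smul_signVector_of_sq_eq hx h
    refine ⟨t, ht, A, (sum_signVector_eq_zero_iff (K := K) A).1 ?_, rfl⟩
    simpa [← mul_sum, ht] using hsum
  · rintro ⟨t, -, A, -, rfl⟩ j k
    simp [mul_pow, signVector_apply_sq]

end CommRing

section Field

variable [Field K] [Nonempty ι]

noncomputable def signPoint (A : Finset ι) : Projectivization K (ι → K) :=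
  .mk K (signVector A) (signVector_ne_zero A)

lemma mk_eq_signPoint {v : ι → K} (hv : v ≠ 0) {A : Finset ι} (h : v = signVector A) :
    Projectivization.mk K v hv = signPoint A := by
  subst h; rfl

lemma signPoint_compl [Fintype ι] (A : Finset ι) :
    (signPoint Aᶜ : Projectivization K (ι → K)) = signPoint A :=
  (Projectivization.mk_eq_mk_iff' K _ _ _ _).2 ⟨-1, by simp [signVector_compl]⟩

lemma signPoint_injOn [NeZero (2 : K)] (i : ι) :
    Set.InjOn (signPoint : Finset ι → Projectivization K (ι → K)) {A | i ∈ A} := by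
  intro A (hA : i ∈ A) B (hB : i ∈ B) h
  obtain ⟨a, ha⟩ := (Projectivization.mk_eq_mk_iff' K _ _ _ _).1 h
  have ha1 : a = 1 := by simpa [signVector, hA, hB] using congrFun ha i
  exact signVector_injective (by simpa [ha1] using ha.symm)

lemma setOf_mk_signVector_comp_perm (B : Finset ι) :
    {p : Projectivization K (ι → K) |
      ∃ (σ : Equiv.Perm ι) (h : (fun k => signVector B (σ k)) ≠ 0),
        p = Projectivization.mk K (fun k => signVector B (σ k)) h} =
      signPoint '' {A | #A = #B} := by
  ext p
  constructor
  · rintro ⟨σ, h, rfl⟩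
    exact ⟨σ⁻¹ • B, card_smul_finset _ _,
      (mk_eq_signPoint h (signVector_comp_perm B σ)).symm⟩
  · rintro ⟨A, hA : #A = #B, rfl⟩
    obtain ⟨σ, hσ⟩ := (Set.powersetCard.isPretransitive (α := ι)).exists_smul_eq
      (⟨A, hA⟩ : Set.powersetCard ι #B) ⟨B, rfl⟩
    have hσA : σ • A = B := congrArg Subtype.val hσ
    have hv : (fun k => signVector B (σ k)) = (signVector A : ι → K) :=
      (signVector_comp_perm B σ).trans (by rw [← hσA, inv_smul_smul])
    exact ⟨σ, hv ▸ signVector_ne_zero A, (mk_eq_signPoint _ hv).symm⟩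

variable [Fintype ι]

theorem segreSingularLocus_eq_image [CharZero K] :
    segreSingularLocus ι K = signPoint '' {A | 2 * #A = Fintype.card ι} := by
  ext p
  constructor
  · rintro ⟨x, hx, rfl, hsum, -, hsq⟩
    obtain ⟨t, ht, A, hA, rfl⟩ := (sq_eq_sq_iff_exists_eq_smul_signVector hx hsum).1 hsq
    exact ⟨A, hA, ((Projectivization.mk_eq_mk_iff' K _ _ _ _).2 ⟨t, rfl⟩).symm⟩
  · rintro ⟨A, hA, rfl⟩
    have hsum := (sum_signVector_eq_zero_iff (K := K) A).2 hA
    refine ⟨signVector A, signVector_ne_zero A, rfl, hsum, ?_, fun j k => ?_⟩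
    · simpa only [signVector_apply_pow_three] using hsum
    · rw [signVector_apply_sq, signVector_apply_sq]

lemma ncard_image_signPoint [CharZero K] (i : ι) :
    ((signPoint : Finset ι → Projectivization K (ι → K)) ''
      {A | 2 * #A = Fintype.card ι}).ncard =
      #{A : Finset ι | 2 * #A = Fintype.card ι ∧ i ∈ A} := by
  have hhalf : signPoint '' {A : Finset ι | 2 * #A = Fintype.card ι} =
      (signPoint : Finset ι → Projectivization K (ι → K)) ''
        ↑({A : Finset ι | 2 * #A = Fintype.card ι ∧ i ∈ A} : Finset (Finset ι)) := by
    refine Set.Subset.antisymm ?_ (Set.image_mono fun A hA => by simp_all)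
    rintro _ ⟨A, hA : 2 * #A = _, rfl⟩
    by_cases hi : i ∈ A
    · exact ⟨A, by simp [hA, hi], rfl⟩
    · refine ⟨Aᶜ, ?_, signPoint_compl A⟩
      simp only [coe_filter, mem_univ, true_and, Set.mem_ofPred_eq, card_compl, mem_compl, hi,
        not_false_eq_true, and_true]
      omega
  rw [hhalf, Set.InjOn.ncard_image, Set.ncard_coe_finset]
  exact (signPoint_injOn i).mono fun A hA => by simp_all

end Field

lemma eps0_eq_signVector : eps0 = signVector (Finset.Iio 3) := by
  ext k; simp [eps0, signVector, Fin.lt_def]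

/-- A point `[x]` of the Segre cubic is a singular point (all `x_k²` equal,
by the Jacobian criterion) if and only if there are `t ≠ 0` and a 3-element subset
`A ⊆ {0,…,5}` with `x_k = t` for `k ∈ A` and `x_k = -t` for `k ∉ A`.  Consequently the
singular locus of the Segre cubic consists of exactly 10 points of `P⁵`, namely the
`S₆`-orbit of `[1:1:1:-1:-1:-1]`. -/
theorem segre_cubic_singular_locus :
    (∀ x : Fin 6 → ℂ, x ≠ 0 → (∑ k, x k) = 0 → (∑ k, (x k) ^ 3) = 0 →
      ((∀ j k, (x j) ^ 2 = (x k) ^ 2) ↔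
        ∃ (t : ℂ) (A : Finset (Fin 6)), t ≠ 0 ∧ A.card = 3 ∧
          ∀ k, x k = if k ∈ A then t else -t)) ∧
    {p : Projectivization ℂ (Fin 6 → ℂ) |
      ∃ (x : Fin 6 → ℂ) (hx : x ≠ 0), p = Projectivization.mk ℂ x hx ∧
        (∑ k, x k) = 0 ∧ (∑ k, (x k) ^ 3) = 0 ∧
        ∀ j k, (x j) ^ 2 = (x k) ^ 2}.ncard = 10 ∧
    {p : Projectivization ℂ (Fin 6 → ℂ) |
      ∃ (x : Fin 6 → ℂ) (hx : x ≠ 0), p = Projectivization.mk ℂ x hx ∧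
        (∑ k, x k) = 0 ∧ (∑ k, (x k) ^ 3) = 0 ∧
        ∀ j k, (x j) ^ 2 = (x k) ^ 2} =
      {p : Projectivization ℂ (Fin 6 → ℂ) |
        ∃ (σ : Equiv.Perm (Fin 6)) (h : (fun k => eps0 (σ k)) ≠ 0),
          p = Projectivization.mk ℂ (fun k => eps0 (σ k)) h} := by
  have hhalf (n : ℕ) : 2 * n = Fintype.card (Fin 6) ↔ n = 3 := by
    rw [Fintype.card_fin]; omega
  refine ⟨fun x hx hsum _ => ?_, ?_, ?_⟩
  · rw [sq_eq_sq_iff_exists_eq_smul_signVector hx hsum]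
    simp only [funext_iff, smul_signVector_apply, hhalf, exists_and_left]
  · change (segreSingularLocus (Fin 6) ℂ).ncard = 10
    rw [segreSingularLocus_eq_image, ncard_image_signPoint 0]
    decide
  · change segreSingularLocus (Fin 6) ℂ = _
    rw [segreSingularLocus_eq_image, eps0_eq_signVector, setOf_mk_signVector_comp_perm]
    simp only [hhalf, Fin.card_Iio]
    rfl
end

section
/- Each Segre plane (the projectivization of P_τ) contains exactly 4 of the 10 nodes of Σ₃, namely the [ε^A] with ε^A_{τ(i)} = −ε^A_i for all i, and each node [ε^A] lies on exactly 6 of the 15 Segre planes. Thus the Segre planes and nodes of Σ₃ form a (15₄, 10₆)-configuration. -/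
open scoped BigOperators

/-- The vector `ε^A` with coordinate `1` on `A` and `-1` off `A`. -/
noncomputable def eps (A : Finset (Fin 6)) : Fin 6 → ℂ := fun k => if k ∈ A then 1 else -1

lemma eps_ne_zero (A : Finset (Fin 6)) : eps A ≠ 0 := by
  intro h
  have h0 := congrFun h 0
  simp only [eps, Pi.zero_apply] at h0
  split at h0
  · exact one_ne_zero h0
  · exact (neg_ne_zero.mpr (one_ne_zero (α := ℂ))) h0

lemma mem_segrePlane_iff (τ : Equiv.Perm (Fin 6)) (A : Finset (Fin 6)) :
    eps A ∈ segrePlane τ ↔ ∀ i, (τ i ∈ A ↔ ¬ i ∈ A) := by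
  show (∀ i, eps A i + eps A (τ i) = 0) ↔ _
  refine forall_congr' fun i => ?_
  by_cases hA : i ∈ A <;> by_cases hB : τ i ∈ A <;>
    simp only [eps, hA, hB, if_true, if_false, iff_true, iff_false, not_true, not_false_iff,
      true_iff, false_iff, not_not] <;> norm_num

lemma neg_iff (τ : Equiv.Perm (Fin 6)) (A : Finset (Fin 6)) :
    (∀ i, eps A (τ i) = -(eps A i)) ↔ ∀ i, (τ i ∈ A ↔ ¬ i ∈ A) := by
  refine forall_congr' fun i => ?_
  by_cases hA : i ∈ A <;> by_cases hB : τ i ∈ A <;>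
    simp only [eps, hA, hB, if_true, if_false, iff_true, iff_false, not_true, not_false_iff,
      true_iff, false_iff, not_not] <;> norm_num

lemma eps_inj {A B : Finset (Fin 6)} (h : eps A = eps B) : A = B := by
  ext k
  have hk := congrFun h k
  by_cases hA : k ∈ A <;> by_cases hB : k ∈ B <;> simp only [hA, hB, iff_true, iff_false] <;>
    simp only [eps, hA, hB, if_true, if_false] at hk <;>
    norm_num at hk

lemma eps_compl (B : Finset (Fin 6)) : eps Bᶜ = -eps B := by
  funext k
  by_cases hB : k ∈ B <;> simp [eps, hB]

lemma mk_eps_eq (A B : Finset (Fin 6)) :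
    Projectivization.mk ℂ (eps A) (eps_ne_zero A) = Projectivization.mk ℂ (eps B) (eps_ne_zero B)
    ↔ A = B ∨ A = Bᶜ := by
  rw [Projectivization.mk_eq_mk_iff]
  constructor
  · rintro ⟨a, ha⟩
    have hval : (a : ℂ) = 1 ∨ (a : ℂ) = -1 := by
      have h := congrFun ha 0
      simp only [Pi.smul_apply, Units.smul_def, smul_eq_mul, eps] at h
      by_cases h0B : (0 : Fin 6) ∈ B <;> by_cases h0A : (0 : Fin 6) ∈ A <;>
        simp only [h0B, h0A, if_true, if_false, mul_one, mul_neg] at h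
      · exact Or.inl h
      · exact Or.inr h
      · exact Or.inr (by linear_combination -h)
      · exact Or.inl (by linear_combination -h)
    have key : ∀ k, (a : ℂ) * eps B k = eps A k := by
      intro k
      have := congrFun ha k
      simpa [Units.smul_def] using this
    rcases hval with hv | hv
    · left
      refine (eps_inj ?_).symm
      funext k
      have := key k
      rw [hv, one_mul] at this
      exact this
    · right
      refine eps_inj ?_
      rw [eps_compl]
      funext k
      have := key k
      rw [hv] at this
      simp only [Pi.neg_apply]
      linear_combination -this
  · rintro (rfl | rfl)
    · exact ⟨1, by simp⟩
    · exact ⟨-1, by rw [eps_compl]; funext k; simp [Units.smul_def]⟩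

set_option maxRecDepth 20000 in
/-- each Segre plane contains exactly 4 of the 10 nodes of the Segre cubic,
namely the `[ε^A]` with `ε^A (τ i) = -ε^A i` for all `i`, and each node lies on exactly
6 of the 15 Segre planes: a `(15₄,10₆)`-configuration. -/
theorem segre_planes_nodes_configuration :
    (∀ τ : Equiv.Perm (Fin 6), FPF τ →
      (∀ A : Finset (Fin 6), A.card = 3 →
        (eps A ∈ segrePlane τ ↔ ∀ i, eps A (τ i) = -(eps A i))) ∧
      {p : Projectivization ℂ (Fin 6 → ℂ) |
        ∃ A : Finset (Fin 6), A.card = 3 ∧ eps A ∈ segrePlane τ ∧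
          p = Projectivization.mk ℂ (eps A) (eps_ne_zero A)}.ncard = 4) ∧
    (∀ A : Finset (Fin 6), A.card = 3 →
      {τ : Equiv.Perm (Fin 6) | FPF τ ∧ eps A ∈ segrePlane τ}.ncard = 6) := by
  constructor
  · intro τ hτ
    constructor
    · intro A _
      rw [mem_segrePlane_iff, neg_iff]
    · letI : DecidableEq (Projectivization ℂ (Fin 6 → ℂ)) := Classical.decEq _
      have hset : {p : Projectivization ℂ (Fin 6 → ℂ) |
          ∃ A : Finset (Fin 6), A.card = 3 ∧ eps A ∈ segrePlane τ ∧
            p = Projectivization.mk ℂ (eps A) (eps_ne_zero A)}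
          = ↑((Finset.univ.filter (fun A : Finset (Fin 6) =>
              A.card = 3 ∧ (∀ i, τ i ∈ A ↔ ¬ i ∈ A) ∧ (0 : Fin 6) ∈ A)).image
              (fun A => Projectivization.mk ℂ (eps A) (eps_ne_zero A))) := by
        ext p
        simp only [Set.mem_setOf_eq, Finset.coe_image, Set.mem_image, Finset.mem_coe,
          Finset.mem_filter, Finset.mem_univ, true_and]
        constructor
        · rintro ⟨A, h3, hmem, rfl⟩
          have hC := (mem_segrePlane_iff τ A).mp hmem
          by_cases h0 : (0 : Fin 6) ∈ A
          · exact ⟨A, ⟨h3, hC, h0⟩, rfl⟩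
          · refine ⟨Aᶜ, ⟨?_, ?_, ?_⟩, ?_⟩
            · simp [Finset.card_compl, h3]
            · intro i
              simp only [Finset.mem_compl]
              have := hC i
              tauto
            · simpa [Finset.mem_compl] using h0
            · exact (mk_eps_eq Aᶜ A).mpr (Or.inr rfl)
        · rintro ⟨A, ⟨h3, hC, _⟩, rfl⟩
          exact ⟨A, h3, (mem_segrePlane_iff τ A).mpr hC, rfl⟩
      rw [hset, Set.ncard_coe_finset]
      rw [Finset.card_image_of_injOn ?_]
      · exact (by decide : ∀ σ : Equiv.Perm (Fin 6), (∀ i, σ (σ i) = i) → (∀ i, σ i ≠ i) →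
          (Finset.univ.filter (fun A : Finset (Fin 6) =>
            A.card = 3 ∧ (∀ i, σ i ∈ A ↔ ¬ i ∈ A) ∧ (0 : Fin 6) ∈ A)).card = 4) τ hτ.1 hτ.2
      · intro A hA B hB h
        simp only [Finset.coe_filter, Finset.mem_univ, true_and, Set.mem_setOf_eq] at hA hB
        rcases (mk_eps_eq A B).mp h with rfl | rfl
        · rfl
        · exact absurd hB.2.2 (by simpa [Finset.mem_compl] using hA.2.2)
  · intro A h3
    have hset : {τ : Equiv.Perm (Fin 6) | FPF τ ∧ eps A ∈ segrePlane τ}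
        = ↑(Finset.univ.filter (fun τ : Equiv.Perm (Fin 6) =>
            (∀ i, τ (τ i) = i) ∧ (∀ i, τ i ≠ i) ∧ (∀ i, τ i ∈ A ↔ ¬ i ∈ A))) := by
      ext τ
      simp only [Set.mem_setOf_eq, Finset.coe_filter, Finset.mem_univ, true_and, FPF,
        mem_segrePlane_iff, and_assoc]
    rw [hset, Set.ncard_coe_finset]
    exact (by decide : ∀ B : Finset (Fin 6), B.card = 3 →
      (Finset.univ.filter (fun τ : Equiv.Perm (Fin 6) =>
        (∀ i, τ (τ i) = i) ∧ (∀ i, τ i ≠ i) ∧ (∀ i, τ i ∈ B ↔ ¬ i ∈ B))).card = 6) A h3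
end

section
/- No three of the ten nodes of the Segre cubic are collinear: if A, B, C are 3-element subsets of {0,…,5} such that [ε^A], [ε^B], [ε^C] are pairwise distinct points of P⁵, then the vectors ε^A, ε^B, ε^C are linearly independent in ℂ⁶. -/
open scoped BigOperators

lemma eps_sq (A : Finset (Fin 6)) (k : Fin 6) : eps A k * eps A k = 1 := by
  unfold eps; split <;> ring

lemma eps_apply_ne_zero (A : Finset (Fin 6)) (k : Fin 6) : eps A k ≠ 0 := by
  unfold eps; split
  · exact one_ne_zero
  · exact neg_ne_zero.mpr one_ne_zero

lemma exists_eps_eq {A B : Finset (Fin 6)} (h : A ≠ Bᶜ) : ∃ k, eps A k = eps B k := by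
  rw [Ne, Finset.ext_iff] at h
  push_neg at h
  obtain ⟨k, hk⟩ := h
  simp only [Finset.mem_compl] at hk
  refine ⟨k, ?_⟩
  by_cases h1 : k ∈ A <;> by_cases h2 : k ∈ B <;> simp [eps, h1, h2] <;> tauto

lemma exists_eps_neg {A B : Finset (Fin 6)} (h : A ≠ B) : ∃ k, eps A k = -eps B k := by
  rw [Ne, Finset.ext_iff] at h
  push_neg at h
  obtain ⟨k, hk⟩ := h
  refine ⟨k, ?_⟩
  by_cases h1 : k ∈ A <;> by_cases h2 : k ∈ B <;> simp [eps, h1, h2] <;> tauto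

lemma ne_compl_of_mk_ne {A B : Finset (Fin 6)}
    (h : Projectivization.mk ℂ (eps A) (eps_ne_zero A) ≠
      Projectivization.mk ℂ (eps B) (eps_ne_zero B)) : A ≠ Bᶜ := by
  intro hc
  apply h
  rw [Projectivization.mk_eq_mk_iff]
  refine ⟨-1, ?_⟩
  funext k
  subst hc
  by_cases hk : k ∈ B <;>
    simp [eps, hk, Finset.mem_compl, Units.smul_def]

lemma sq_eq_of_signs (s t x y : ℂ) (hs : s * s = 1) (ht : t * t = 1)
    (h : x * s + y * t = 0) : x * x = y * y := by
  linear_combination (x * s - y * t) * h - x * x * hs + y * y * ht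

/-- no three of the ten nodes of the Segre cubic are collinear: if
`[ε^A], [ε^B], [ε^C]` are pairwise distinct points of `P⁵`, then the vectors
`ε^A, ε^B, ε^C` are linearly independent in `ℂ⁶`. -/
theorem segre_nodes_not_collinear (A B C : Finset (Fin 6))
    (hA : A.card = 3) (hB : B.card = 3) (hC : C.card = 3)
    (hAB : Projectivization.mk ℂ (eps A) (eps_ne_zero A) ≠
      Projectivization.mk ℂ (eps B) (eps_ne_zero B))
    (hAC : Projectivization.mk ℂ (eps A) (eps_ne_zero A) ≠
      Projectivization.mk ℂ (eps C) (eps_ne_zero C))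
    (hBC : Projectivization.mk ℂ (eps B) (eps_ne_zero B) ≠
      Projectivization.mk ℂ (eps C) (eps_ne_zero C)) :
    LinearIndependent ℂ ![eps A, eps B, eps C] := by
  -- distinctness facts
  have hAB1 : A ≠ B := fun h => hAB (by subst h; rfl)
  have hAC1 : A ≠ C := fun h => hAC (by subst h; rfl)
  have hBC1 : B ≠ C := fun h => hBC (by subst h; rfl)
  have hAB2 : A ≠ Bᶜ := ne_compl_of_mk_ne hAB
  have hAC2 : A ≠ Cᶜ := ne_compl_of_mk_ne hAC
  have hBC2 : B ≠ Cᶜ := ne_compl_of_mk_ne hBC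
  rw [Fintype.linearIndependent_iff]
  intro g hg
  set a := g 0 with ha
  set b := g 1 with hb
  set c := g 2 with hc
  have E : ∀ k : Fin 6, a * eps A k + b * eps B k + c * eps C k = 0 := by
    intro k
    have := congrFun hg k
    simpa [Fin.sum_univ_three, Pi.add_apply, Pi.smul_apply, smul_eq_mul, ← ha, ← hb, ← hc]
      using this
  obtain ⟨k1, hk1⟩ := exists_eps_eq hAB2      -- eps A k1 = eps B k1
  obtain ⟨k2, hk2⟩ := exists_eps_neg hAB1     -- eps A k2 = -eps B k2
  obtain ⟨k3, hk3⟩ := exists_eps_eq hAC2      -- eps A k3 = eps C k3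
  obtain ⟨k4, hk4⟩ := exists_eps_neg hAC1     -- eps A k4 = -eps C k4
  obtain ⟨k5, hk5⟩ := exists_eps_eq hBC2      -- eps B k5 = eps C k5
  obtain ⟨k6, hk6⟩ := exists_eps_neg hBC1     -- eps B k6 = -eps C k6
  -- from k5 : a * sA5 + (b+c) * sB5 = 0, so a² = (b+c)²
  have h5 : a * eps A k5 + (b + c) * eps B k5 = 0 := by
    have := E k5; rw [hk5] at this ⊢; linear_combination this
  have h6 : a * eps A k6 + (b - c) * eps B k6 = 0 := by
    have := E k6
    have hc6 : eps C k6 = -eps B k6 := by linear_combination hk6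
    rw [hc6] at this; linear_combination this
  have sq5 : a * a = (b + c) * (b + c) :=
    sq_eq_of_signs _ _ _ _ (eps_sq A k5) (eps_sq B k5) h5
  have sq6 : a * a = (b - c) * (b - c) :=
    sq_eq_of_signs _ _ _ _ (eps_sq A k6) (eps_sq B k6) h6
  have hbc : b * c = 0 := by linear_combination (sq6 - sq5) / 4
  have habc : a = 0 ∧ b = 0 ∧ c = 0 := by
    rcases mul_eq_zero.mp hbc with h0 | h0
    · -- b = 0 : use k3, k4
      have e3 : (a + c) * eps A k3 = 0 := by
        have := E k3; rw [← hk3, h0] at this; linear_combination this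
      have e4 : (a - c) * eps A k4 = 0 := by
        have := E k4
        have : a * eps A k4 + c * eps C k4 = 0 := by rw [h0] at this; linear_combination this
        have hc4 : eps C k4 = -eps A k4 := by linear_combination hk4
        rw [hc4] at this; linear_combination this
      have e3' : a + c = 0 := by
        rcases mul_eq_zero.mp e3 with h | h
        · exact h
        · exact absurd h (eps_apply_ne_zero A k3)
      have e4' : a - c = 0 := by
        rcases mul_eq_zero.mp e4 with h | h
        · exact h
        · exact absurd h (eps_apply_ne_zero A k4)
      refine ⟨by linear_combination (e3' + e4') / 2, h0, by linear_combination (e3' - e4') / 2⟩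
    · -- c = 0 : use k1, k2
      have e1 : (a + b) * eps A k1 = 0 := by
        have := E k1; rw [← hk1, h0] at this; linear_combination this
      have e2 : (a - b) * eps A k2 = 0 := by
        have := E k2
        have : a * eps A k2 + b * eps B k2 = 0 := by rw [h0] at this; linear_combination this
        have hb2 : eps B k2 = -eps A k2 := by linear_combination hk2
        rw [hb2] at this; linear_combination this
      have e1' : a + b = 0 := by
        rcases mul_eq_zero.mp e1 with h | h
        · exact h
        · exact absurd h (eps_apply_ne_zero A k1)
      have e2' : a - b = 0 := by
        rcases mul_eq_zero.mp e2 with h | h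
        · exact h
        · exact absurd h (eps_apply_ne_zero A k2)
      refine ⟨by linear_combination (e1' + e2') / 2, by linear_combination (e1' - e2') / 2, h0⟩
  intro i
  fin_cases i
  · exact habc.1
  · exact habc.2.1
  · exact habc.2.2
end

section
/- Let i ≠ j in {0,…,5} and let {k,l,m,n} = {0,…,5} ∖ {i,j}. In the polynomial ring ℂ[X₀,…,X₅], the polynomial Σ_{t=0}^{5} X_t³ + 3(X_k+X_l)(X_l+X_m)(X_m+X_k) lies in the ideal generated by Σ_{t=0}^{5} X_t and X_i + X_j. Consequently the intersection of the Segre cubic Σ₃ with the hyperplane {[x] : x_i + x_j = 0} is the union of the three Segre planes given by the fixed-point-free involutions τ with τ(i) = j. -/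
open scoped BigOperators
open MvPolynomial

theorem sum6 {M : Type*} [AddCommMonoid M] (i j k l m n : Fin 6) (h : [i,j,k,l,m,n].Nodup) (f : Fin 6 → M) :
    ∑ t, f t = f i + f j + f k + f l + f m + f n := by
  have huniv : [i,j,k,l,m,n].toFinset = Finset.univ := by
    apply Finset.eq_univ_of_card
    rw [List.toFinset_card_of_nodup h]; rfl
  rw [← huniv, List.sum_toFinset f h]
  simp [add_assoc]

theorem cover6 (i j k l m n : Fin 6) (h : [i,j,k,l,m,n].Nodup) (t : Fin 6) :
    t = i ∨ t = j ∨ t = k ∨ t = l ∨ t = m ∨ t = n := by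
  have huniv : [i,j,k,l,m,n].toFinset = Finset.univ := by
    apply Finset.eq_univ_of_card
    rw [List.toFinset_card_of_nodup h]; rfl
  have ht : t ∈ [i,j,k,l,m,n].toFinset := huniv ▸ Finset.mem_univ t
  simpa using ht

noncomputable def trip (a b c d e f : Fin 6) : Equiv.Perm (Fin 6) :=
  Equiv.swap a b * (Equiv.swap c d * Equiv.swap e f)

theorem trip_app (a b c d e f : Fin 6)
    (hab : a≠b) (hac : a≠c) (had : a≠d) (hae : a≠e) (haf : a≠f)
    (hbc : b≠c) (hbd : b≠d) (hbe : b≠e) (hbf : b≠f)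
    (hcd : c≠d) (hce : c≠e) (hcf : c≠f) (hde : d≠e) (hdf : d≠f) (hef : e≠f) :
    trip a b c d e f a = b ∧ trip a b c d e f b = a ∧
    trip a b c d e f c = d ∧ trip a b c d e f d = c ∧
    trip a b c d e f e = f ∧ trip a b c d e f f = e := by
  refine ⟨?_,?_,?_,?_,?_,?_⟩ <;>
    simp [trip, Equiv.swap_apply_of_ne_of_ne, Equiv.swap_apply_left, Equiv.swap_apply_right,
      hab, hac, had, hae, haf, hbc, hbd, hbe, hbf, hcd, hce, hcf, hde, hdf, hef,
      Ne.symm hab, Ne.symm hac, Ne.symm had, Ne.symm hae, Ne.symm haf, Ne.symm hbc,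
      Ne.symm hbd, Ne.symm hbe, Ne.symm hbf, Ne.symm hcd, Ne.symm hce, Ne.symm hcf,
      Ne.symm hde, Ne.symm hdf, Ne.symm hef]

theorem trip_fpf (a b c d e f : Fin 6)
    (hab : a≠b) (hac : a≠c) (had : a≠d) (hae : a≠e) (haf : a≠f)
    (hbc : b≠c) (hbd : b≠d) (hbe : b≠e) (hbf : b≠f)
    (hcd : c≠d) (hce : c≠e) (hcf : c≠f) (hde : d≠e) (hdf : d≠f) (hef : e≠f)
    (hcov : ∀ t : Fin 6, t = a ∨ t = b ∨ t = c ∨ t = d ∨ t = e ∨ t = f) :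
    FPF (trip a b c d e f) := by
  obtain ⟨h1,h2,h3,h4,h5,h6⟩ := trip_app a b c d e f hab hac had hae haf hbc hbd hbe hbf hcd hce hcf hde hdf hef
  constructor
  · intro t
    rcases hcov t with rfl|rfl|rfl|rfl|rfl|rfl <;> simp [h1,h2,h3,h4,h5,h6]
  · intro t
    rcases hcov t with rfl|rfl|rfl|rfl|rfl|rfl <;>
      simp [h1,h2,h3,h4,h5,h6, hab, hcd, hef, Ne.symm hab, Ne.symm hcd, Ne.symm hef]

theorem trip_mem (a b c d e f : Fin 6)
    (hab : a≠b) (hac : a≠c) (had : a≠d) (hae : a≠e) (haf : a≠f)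
    (hbc : b≠c) (hbd : b≠d) (hbe : b≠e) (hbf : b≠f)
    (hcd : c≠d) (hce : c≠e) (hcf : c≠f) (hde : d≠e) (hdf : d≠f) (hef : e≠f)
    (hcov : ∀ t : Fin 6, t = a ∨ t = b ∨ t = c ∨ t = d ∨ t = e ∨ t = f)
    (x : Fin 6 → ℂ) (p1 : x a + x b = 0) (p2 : x c + x d = 0) (p3 : x e + x f = 0) :
    x ∈ segrePlane (trip a b c d e f) := by
  obtain ⟨h1,h2,h3,h4,h5,h6⟩ := trip_app a b c d e f hab hac had hae haf hbc hbd hbe hbf hcd hce hcf hde hdf hef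
  intro t
  rcases hcov t with rfl|rfl|rfl|rfl|rfl|rfl
  · rw [h1]; exact p1
  · rw [h2]; linear_combination p1
  · rw [h3]; exact p2
  · rw [h4]; linear_combination p2
  · rw [h5]; exact p3
  · rw [h6]; linear_combination p3

theorem master (i j k l m n : Fin 6) (h : [i,j,k,l,m,n].Nodup) :
    {τ : Equiv.Perm (Fin 6) | FPF τ ∧ τ i = j}.ncard = 3 ∧
    ∀ x : Fin 6 → ℂ, x ≠ 0 → (∑ t, x t) = 0 → x i + x j = 0 →
      ((∑ t, (x t) ^ 3) = 0 ↔
        ∃ τ : Equiv.Perm (Fin 6), FPF τ ∧ τ i = j ∧ x ∈ segrePlane τ) := by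
  have hcov := cover6 i j k l m n h
  have h' := h
  simp [List.nodup_cons] at h'
  obtain ⟨⟨hij,hik,hil,him,hin⟩,⟨hjk,hjl,hjm,hjn⟩,⟨hkl,hkm,hkn⟩,⟨hlm,hln⟩,hmn⟩ := h'
  -- the three involutions
  obtain ⟨e11,e12,e13,e14,e15,e16⟩ := trip_app i j k l m n hij hik hil him hin hjk hjl hjm hjn hkl hkm hkn hlm hln hmn
  obtain ⟨e21,e22,e23,e24,e25,e26⟩ := trip_app i j k m l n hij hik him hil hin hjk hjm hjl hjn hkm hkl hkn (Ne.symm hlm) hmn hln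
  obtain ⟨e31,e32,e33,e34,e35,e36⟩ := trip_app i j k n l m hij hik hin hil him hjk hjn hjl hjm hkn hkl hkm (Ne.symm hln) (Ne.symm hmn) hlm
  have hcov2 : ∀ t : Fin 6, t = i ∨ t = j ∨ t = k ∨ t = m ∨ t = l ∨ t = n := fun t => by
    rcases hcov t with h1|h1|h1|h1|h1|h1
    exacts [Or.inl h1, Or.inr (Or.inl h1), Or.inr (Or.inr (Or.inl h1)),
      Or.inr (Or.inr (Or.inr (Or.inr (Or.inl h1)))),
      Or.inr (Or.inr (Or.inr (Or.inl h1))), Or.inr (Or.inr (Or.inr (Or.inr (Or.inr h1))))]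
  have hcov3 : ∀ t : Fin 6, t = i ∨ t = j ∨ t = k ∨ t = n ∨ t = l ∨ t = m := fun t => by
    rcases hcov t with h1|h1|h1|h1|h1|h1
    exacts [Or.inl h1, Or.inr (Or.inl h1), Or.inr (Or.inr (Or.inl h1)),
      Or.inr (Or.inr (Or.inr (Or.inr (Or.inl h1)))),
      Or.inr (Or.inr (Or.inr (Or.inr (Or.inr h1)))), Or.inr (Or.inr (Or.inr (Or.inl h1)))]
  have hfpf1 : FPF (trip i j k l m n) := trip_fpf i j k l m n hij hik hil him hin hjk hjl hjm hjn hkl hkm hkn hlm hln hmn hcov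
  have hfpf2 : FPF (trip i j k m l n) := trip_fpf i j k m l n hij hik him hil hin hjk hjm hjl hjn hkm hkl hkn (Ne.symm hlm) hmn hln hcov2
  have hfpf3 : FPF (trip i j k n l m) := trip_fpf i j k n l m hij hik hin hil him hjk hjn hjl hjm hkn hkl hkm (Ne.symm hln) (Ne.symm hmn) hlm hcov3
  constructor
  · apply Set.ncard_eq_three.mpr
    refine ⟨trip i j k l m n, trip i j k m l n, trip i j k n l m, ?_, ?_, ?_, ?_⟩
    · exact fun hE => hlm (by rw [← e13, hE, e23])
    · exact fun hE => hln (by rw [← e13, hE, e33])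
    · exact fun hE => hmn (by rw [← e23, hE, e33])
    · ext τ
      simp only [Set.mem_setOf_eq, Set.mem_insert_iff, Set.mem_singleton_iff]
      constructor
      · rintro ⟨⟨hinv, hnf⟩, hti⟩
        have htj : τ j = i := by rw [← hti]; exact hinv i
        have hinj := τ.injective
        have key : ∀ {a b : Fin 6}, τ a = b → a = τ b := fun {a b} hab => by rw [← hab, hinv]
        have hk2 : τ k ≠ i := fun hh => hjk ((key hh).trans hti).symm
        have hk3 : τ k ≠ j := fun hh => hik (hinj (hti.trans hh.symm))
        rcases hcov (τ k) with hh|hh|hh|hh|hh|hh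
        · exact absurd hh hk2
        · exact absurd hh hk3
        · exact absurd hh (hnf k)
        · -- τ k = l : τ = τ₁
          left
          have hlk : τ l = k := (key hh).symm
          have hm2 : τ m ≠ i := fun h2 => hjm ((key h2).trans hti).symm
          have hm3 : τ m ≠ j := fun h2 => him (hinj (hti.trans h2.symm))
          have hm4 : τ m ≠ k := fun h2 => hlm (hinj (hlk.trans h2.symm))
          have hm5 : τ m ≠ l := fun h2 => hkm (hinj (hh.trans h2.symm))
          rcases hcov (τ m) with h3|h3|h3|h3|h3|h3
          · exact absurd h3 hm2
          · exact absurd h3 hm3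
          · exact absurd h3 hm4
          · exact absurd h3 hm5
          · exact absurd h3 (hnf m)
          · have hnm : τ n = m := (key h3).symm
            refine Equiv.ext fun t => ?_
            rcases hcov t with rfl|rfl|rfl|rfl|rfl|rfl
            · rw [hti, e11]
            · rw [htj, e12]
            · rw [hh, e13]
            · rw [hlk, e14]
            · rw [h3, e15]
            · rw [hnm, e16]
        · -- τ k = m : τ = τ₂
          right; left
          have hmk : τ m = k := (key hh).symm
          have hl2 : τ l ≠ i := fun h2 => hjl ((key h2).trans hti).symm
          have hl3 : τ l ≠ j := fun h2 => hil (hinj (hti.trans h2.symm))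
          have hl4 : τ l ≠ k := fun h2 => hlm (hinj (h2.trans hmk.symm))
          have hl5 : τ l ≠ m := fun h2 => hkl (hinj (hh.trans h2.symm))
          rcases hcov (τ l) with h3|h3|h3|h3|h3|h3
          · exact absurd h3 hl2
          · exact absurd h3 hl3
          · exact absurd h3 hl4
          · exact absurd h3 (hnf l)
          · exact absurd h3 hl5
          · have hnl : τ n = l := (key h3).symm
            refine Equiv.ext fun t => ?_
            rcases hcov t with rfl|rfl|rfl|rfl|rfl|rfl
            · rw [hti, e21]
            · rw [htj, e22]
            · rw [hh, e23]
            · rw [h3, e25]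
            · rw [hmk, e24]
            · rw [hnl, e26]
        · -- τ k = n : τ = τ₃
          right; right
          have hnk : τ n = k := (key hh).symm
          have hl2 : τ l ≠ i := fun h2 => hjl ((key h2).trans hti).symm
          have hl3 : τ l ≠ j := fun h2 => hil (hinj (hti.trans h2.symm))
          have hl4 : τ l ≠ k := fun h2 => hln (hinj (h2.trans hnk.symm))
          have hl5 : τ l ≠ n := fun h2 => hkl (hinj (hh.trans h2.symm))
          rcases hcov (τ l) with h3|h3|h3|h3|h3|h3
          · exact absurd h3 hl2
          · exact absurd h3 hl3
          · exact absurd h3 hl4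
          · exact absurd h3 (hnf l)
          · have hml : τ m = l := (key h3).symm
            refine Equiv.ext fun t => ?_
            rcases hcov t with rfl|rfl|rfl|rfl|rfl|rfl
            · rw [hti, e31]
            · rw [htj, e32]
            · rw [hh, e33]
            · rw [h3, e35]
            · rw [hml, e36]
            · rw [hnk, e34]
          · exact absurd h3 hl5
      · rintro (rfl|rfl|rfl)
        · exact ⟨hfpf1, e11⟩
        · exact ⟨hfpf2, e21⟩
        · exact ⟨hfpf3, e31⟩
  · intro x hx0 hsum hxij
    have hs : x i + x j + x k + x l + x m + x n = 0 := by
      rw [← sum6 i j k l m n h]; exact hsum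
    constructor
    · intro hc
      have hc' : x i ^ 3 + x j ^ 3 + x k ^ 3 + x l ^ 3 + x m ^ 3 + x n ^ 3 = 0 := by
        rw [← sum6 i j k l m n h (fun t => x t ^ 3)]; exact hc
      have hprod : (x k + x l) * ((x l + x m) * (x m + x k)) = 0 := by
        linear_combination (((x k + x l + x m) ^ 2 - (x k + x l + x m) * x n + x n ^ 2) / 3) * hs +
          ((x i ^ 2 - x i * x j + x j ^ 2 -
              ((x k + x l + x m) ^ 2 - (x k + x l + x m) * x n + x n ^ 2)) / 3) * hxij -
          (1 / 3 : ℂ) * hc'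
      rcases mul_eq_zero.mp hprod with h1 | h23
      · have h2 : x m + x n = 0 := by linear_combination hs - hxij - h1
        exact ⟨trip i j k l m n, hfpf1, e11,
          trip_mem i j k l m n hij hik hil him hin hjk hjl hjm hjn hkl hkm hkn hlm hln hmn hcov x hxij h1 h2⟩
      rcases mul_eq_zero.mp h23 with h1 | h1
      · -- x l + x m = 0, pairs (l,m),(k,n)
        have h2 : x k + x n = 0 := by linear_combination hs - hxij - h1
        have hcov' : ∀ t : Fin 6, t = i ∨ t = j ∨ t = l ∨ t = m ∨ t = k ∨ t = n := fun t => by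
          rcases hcov t with h3|h3|h3|h3|h3|h3
          exacts [Or.inl h3, Or.inr (Or.inl h3), Or.inr (Or.inr (Or.inr (Or.inr (Or.inl h3)))),
            Or.inr (Or.inr (Or.inl h3)), Or.inr (Or.inr (Or.inr (Or.inl h3))),
            Or.inr (Or.inr (Or.inr (Or.inr (Or.inr h3))))]
        obtain ⟨f1, -, -, -, -, -⟩ := trip_app i j l m k n hij hil him hik hin hjl hjm hjk hjn hlm (Ne.symm hkl) hln (Ne.symm hkm) hmn hkn
        exact ⟨trip i j l m k n,
          trip_fpf i j l m k n hij hil him hik hin hjl hjm hjk hjn hlm (Ne.symm hkl) hln (Ne.symm hkm) hmn hkn hcov', f1,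
          trip_mem i j l m k n hij hil him hik hin hjl hjm hjk hjn hlm (Ne.symm hkl) hln (Ne.symm hkm) hmn hkn hcov' x hxij h1 h2⟩
      · -- x m + x k = 0, pairs (m,k),(l,n)
        have h2 : x l + x n = 0 := by linear_combination hs - hxij - h1
        have hcov' : ∀ t : Fin 6, t = i ∨ t = j ∨ t = m ∨ t = k ∨ t = l ∨ t = n := fun t => by
          rcases hcov t with h3|h3|h3|h3|h3|h3
          exacts [Or.inl h3, Or.inr (Or.inl h3), Or.inr (Or.inr (Or.inr (Or.inl h3))),
            Or.inr (Or.inr (Or.inr (Or.inr (Or.inl h3)))), Or.inr (Or.inr (Or.inl h3)),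
            Or.inr (Or.inr (Or.inr (Or.inr (Or.inr h3))))]
        obtain ⟨f1, -, -, -, -, -⟩ := trip_app i j m k l n hij him hik hil hin hjm hjk hjl hjn (Ne.symm hkm) (Ne.symm hlm) hmn hkl hkn hln
        exact ⟨trip i j m k l n,
          trip_fpf i j m k l n hij him hik hil hin hjm hjk hjl hjn (Ne.symm hkm) (Ne.symm hlm) hmn hkl hkn hln hcov', f1,
          trip_mem i j m k l n hij him hik hil hin hjm hjk hjl hjn (Ne.symm hkm) (Ne.symm hlm) hmn hkl hkn hln hcov' x hxij h1 h2⟩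
    · rintro ⟨τ, ⟨hinv, -⟩, -, hmem⟩
      have hneg : ∀ t, x (τ t) = - x t := fun t => by linear_combination hmem t
      have h1 : ∑ t, x t ^ 3 = ∑ t, x (τ t) ^ 3 := (Equiv.sum_comp τ fun t => x t ^ 3).symm
      have h2 : ∑ t, x (τ t) ^ 3 = -∑ t, x t ^ 3 := by
        rw [← Finset.sum_neg_distrib]
        exact Finset.sum_congr rfl fun t _ => by rw [hneg]; ring
      have h3 := h1.trans h2
      linear_combination (1 / 2 : ℂ) * h3


/-- for distinct `i, j` and `{k,l,m,n} = {0,…,5} ∖ {i,j}` the polynomial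
`∑ X_t³ + 3(X_k+X_l)(X_l+X_m)(X_m+X_k)` lies in the ideal generated by `∑ X_t` and
`X_i + X_j`; consequently the intersection of the Segre cubic with the hyperplane
`{x_i + x_j = 0}` is the union of the three Segre planes given by the fixed-point-free
involutions `τ` with `τ i = j`. -/
theorem segre_cubic_hyperplane_three_planes :
    (∀ i j k l m n : Fin 6, [i, j, k, l, m, n].Nodup →
      (∑ t, (X t : MvPolynomial (Fin 6) ℂ) ^ 3) +
          3 * (X k + X l) * (X l + X m) * (X m + X k) ∈
        Ideal.span {(∑ t, X t : MvPolynomial (Fin 6) ℂ), X i + X j}) ∧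
    (∀ i j : Fin 6, i ≠ j →
      {τ : Equiv.Perm (Fin 6) | FPF τ ∧ τ i = j}.ncard = 3 ∧
      ∀ x : Fin 6 → ℂ, x ≠ 0 → (∑ t, x t) = 0 → x i + x j = 0 →
        ((∑ t, (x t) ^ 3) = 0 ↔
          ∃ τ : Equiv.Perm (Fin 6), FPF τ ∧ τ i = j ∧ x ∈ segrePlane τ)) := by
  constructor
  · intro i j k l m n h
    rw [sum6 i j k l m n h (fun t => (X t : MvPolynomial (Fin 6) ℂ) ^ 3),
        sum6 i j k l m n h (fun t => (X t : MvPolynomial (Fin 6) ℂ)),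
        Ideal.mem_span_pair]
    exact ⟨(X k + X l + X m)^2 - (X k + X l + X m) * X n + X n^2,
      X i^2 - X i * X j + X j^2 - ((X k + X l + X m)^2 - (X k + X l + X m) * X n + X n^2),
      by ring⟩
  · intro i j hij
    fin_cases i <;> fin_cases j <;>
      first
        | exact absurd rfl hij
        | exact master _ _ 2 3 4 5 (by decide)
        | exact master _ _ 1 3 4 5 (by decide)
        | exact master _ _ 1 2 4 5 (by decide)
        | exact master _ _ 1 2 3 5 (by decide)
        | exact master _ _ 1 2 3 4 (by decide)
        | exact master _ _ 0 3 4 5 (by decide)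
        | exact master _ _ 0 2 4 5 (by decide)
        | exact master _ _ 0 2 3 5 (by decide)
        | exact master _ _ 0 2 3 4 (by decide)
        | exact master _ _ 0 1 4 5 (by decide)
        | exact master _ _ 0 1 3 5 (by decide)
        | exact master _ _ 0 1 3 4 (by decide)
        | exact master _ _ 0 1 2 5 (by decide)
        | exact master _ _ 0 1 2 4 (by decide)
        | exact master _ _ 0 1 2 3 (by decide)
end

section
/- The singular locus of the Castelnuovo–Richmond quartic CR₄ is the union of the 15 lines L_τ: a point [x] ∈ CR₄ is a singular point of CR₄ if and only if there is a fixed-point-free involution τ of {0,…,5} with x_k = x_{τ(k)} for all k. In particular each line L_τ is contained in CR₄ and every point of L_τ is a singular point of CR₄. -/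
/-!
If `∇F(x) = c·(1,…,1)`, every coordinate `t` of `x` is a root of `16t³ - 4St + c` with
`S = ∑ x_k²`, so two distinct coordinates `a ≠ b` satisfy `S = 4(a² + ab + b²)`. Summing
`S - 4(a² + a x_k + x_k²)` over `k` and using `∑ x_k = 0` shows that a value `a` of `x` is taken
exactly twice unless `S = 12a²`; in that case the coordinates only take the values `a` and `-2a`,
and `a` is taken four times. So every fibre of `x` has even size, which is exactly what is needed
for a fixed-point-free involution preserving `x`. Conversely, if `x` is invariant under such an
involution its coordinates are `a, a, b, b, d, d` with `a + b + d = 0`, and these satisfy the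
relation above. Finally `F` vanishes on such points by Euler's identity `∑ x_k ∂_k F = 4F`.
-/

open scoped BigOperators

/-- The quartic `F(x) = (∑ x_k²)² - 4 ∑ x_k⁴` defining the Castelnuovo–Richmond quartic. -/
noncomputable def Fq (x : Fin 6 → ℂ) : ℂ := (∑ k, (x k) ^ 2) ^ 2 - 4 * (∑ k, (x k) ^ 4)

/-- The gradient `∇F(x) = (4 x_k ∑ x_j² - 16 x_k³)_k`. -/
noncomputable def gradF (x : Fin 6 → ℂ) : Fin 6 → ℂ :=
  fun k => 4 * x k * (∑ j, (x j) ^ 2) - 16 * (x k) ^ 3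

/-- The 2-dimensional subspace whose projectivization is the line
`L_τ = {x : x k = x (τ k) for all k, ∑ x_k = 0}`. -/
noncomputable def lineL (τ : Equiv.Perm (Fin 6)) : Submodule ℂ (Fin 6 → ℂ) where
  carrier := {x | (∀ k, x k = x (τ k)) ∧ (∑ k, x k) = 0}
  add_mem' := by
    rintro a b ⟨ha1, ha2⟩ ⟨hb1, hb2⟩
    refine ⟨fun k => ?_, ?_⟩
    · simp only [Pi.add_apply, ha1 k, hb1 k]
    · simp only [Pi.add_apply]
      rw [Finset.sum_add_distrib, ha2, hb2, add_zero]
  zero_mem' := ⟨fun k => rfl, by simp⟩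
  smul_mem' := by
    rintro c x ⟨h1, h2⟩
    refine ⟨fun k => ?_, ?_⟩
    · simp only [Pi.smul_apply, h1 k]
    · simp only [Pi.smul_apply, smul_eq_mul]
      rw [← Finset.mul_sum, h2, mul_zero]

open Finset

theorem exists_involutive_fixedPointFree_of_even_card {E : Type*} [Fintype E]
    (h : Even (Fintype.card E)) :
    ∃ σ : Equiv.Perm E, Function.Involutive σ ∧ ∀ e, σ e ≠ e := by
  obtain ⟨m, hm⟩ := h
  let e : E ≃ Fin m ⊕ Fin m := (Fintype.equivFinOfCardEq hm).trans finSumFinEquiv.symm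
  refine ⟨e.trans ((Equiv.sumComm _ _).trans e.symm), fun a => by simp, fun a ha => ?_⟩
  have : Equiv.sumComm _ _ (e a) = e a := by simpa using congrArg e ha
  cases h : e a <;> simp [h] at this

theorem exists_involutive_fixedPointFree_comp_eq {α β : Type*} [Fintype α] [DecidableEq β]
    (f : α → β) (h : ∀ b, Even #{a | f a = b}) :
    ∃ τ : Equiv.Perm α, Function.Involutive τ ∧ (∀ a, τ a ≠ a) ∧ ∀ a, f (τ a) = f a := by
  choose σ hσ using fun b => exists_involutive_fixedPointFree_of_even_card
    (E := {a // f a = b}) (by rw [Fintype.card_subtype]; exact h b)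
  let e := Equiv.sigmaFiberEquiv f
  refine ⟨e.permCongr (Equiv.sigmaCongrRight σ), ?_, ?_, ?_⟩ <;>
    refine e.surjective.forall.mpr fun ⟨b, y⟩ => ?_ <;>
    simp only [Equiv.permCongr_apply, e.symm_apply_apply]
  · simp [(hσ b).1 y]
  · exact fun hy => (hσ b).2 y (by simpa [e, Subtype.ext_iff] using hy)
  · simp [e, (σ b y).2, y.2]

theorem exists_sum_eq_two_nsmul_of_card_eq_six {α : Type*} [Fintype α] [DecidableEq α]
    (M : Type*) [AddCommMonoid M] (hα : Fintype.card α = 6) {τ : Equiv.Perm α}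
    (hinv : Function.Involutive τ) (hfree : ∀ a, τ a ≠ a) {p q : α} (hqp : q ≠ p)
    (hqτp : q ≠ τ p) :
    ∃ r, ∀ g : α → M, (∀ a, g (τ a) = g a) → ∑ a, g a = 2 • (g p + g q + g r) := by
  have hPQ : Disjoint ({p, τ p} : Finset α) {q, τ q} := by
    have := hinv p; have := hinv q
    simp only [disjoint_insert_left, disjoint_insert_right, mem_insert, mem_singleton,
      disjoint_singleton]
    grind
  have hcard : #({p, τ p} ∪ {q, τ q} : Finset α)ᶜ = 2 := by
    rw [card_compl, card_union_of_disjoint hPQ, card_pair (hfree p).symm,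
      card_pair (hfree q).symm, hα]
  obtain ⟨r, s, hrs, hR⟩ := card_eq_two.mp hcard
  have hs : s = τ r := by
    have hr : r ∈ ({p, τ p} ∪ {q, τ q} : Finset α)ᶜ := hR ▸ mem_insert_self r {s}
    have hτr : τ r ∈ ({p, τ p} ∪ {q, τ q} : Finset α)ᶜ := by
      have := hinv p; have := hinv q; have := hinv r
      simp only [mem_compl, mem_union, mem_insert, mem_singleton] at hr ⊢
      grind
    rw [hR] at hτr
    simp only [mem_insert, mem_singleton] at hτr
    exact (hτr.resolve_left (hfree r)).symm
  refine ⟨r, fun g hg => ?_⟩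
  rw [← sum_add_sum_compl ({p, τ p} ∪ {q, τ q}), sum_union hPQ, hR, hs,
    sum_pair (hfree p).symm, sum_pair (hfree q).symm, sum_pair (hfree r).symm, hg, hg, hg]
  abel

theorem sum_comp_eq_card_fiber_nsmul {α β M : Type*} [Fintype α] [DecidableEq β]
    [AddCommMonoid M] (f : α → β) (φ : β → M) (b : β) (h : ∀ a, f a ≠ b → φ (f a) = 0) :
    ∑ a, φ (f a) = #{a | f a = b} • φ b := by
  rw [← sum_filter_of_ne fun a _ => not_imp_comm.mp (h a), ← sum_const]
  exact sum_congr rfl fun a ha => by rw [(mem_filter.mp ha).2]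

section

variable (x : Fin 6 → ℂ)

theorem gradF_sub_gradF (p q : Fin 6) :
    gradF x p - gradF x q =
      4 * (x p - x q) * (∑ j, x j ^ 2 - 4 * (x p ^ 2 + x p * x q + x q ^ 2)) := by
  simp only [gradF]
  ring

theorem gradF_eq_gradF_iff (p q : Fin 6) :
    gradF x p = gradF x q ↔
      x p = x q ∨ ∑ j, x j ^ 2 = 4 * (x p ^ 2 + x p * x q + x q ^ 2) := by
  rw [← sub_eq_zero, gradF_sub_gradF, mul_eq_zero, mul_eq_zero, sub_eq_zero, sub_eq_zero]
  simp

theorem sum_mul_gradF : ∑ k, x k * gradF x k = 4 * Fq x :=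
  calc ∑ k, x k * gradF x k = ∑ k, (4 * (∑ j, x j ^ 2) * x k ^ 2 - 16 * x k ^ 4) :=
        sum_congr rfl fun k _ => by simp only [gradF]; ring
    _ = 4 * Fq x := by rw [sum_sub_distrib, ← mul_sum, ← mul_sum, Fq]; ring

variable {x}

theorem Fq_eq_zero_of_gradF_eq {c : ℂ} (hc : ∀ k, gradF x k = c) (hsum : ∑ k, x k = 0) :
    Fq x = 0 := by
  have h := sum_mul_gradF x
  simp only [hc, ← sum_mul, hsum, zero_mul] at h
  linear_combination -h / 4

section Singular

variable {c : ℂ} (hc : ∀ k, gradF x k = c) (hsum : ∑ k, x k = 0)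
include hc hsum

theorem card_fiber_mul_eq (p : Fin 6) :
    (#{k | x k = x p} : ℂ) * (∑ j, x j ^ 2 - 12 * x p ^ 2) =
      2 * (∑ j, x j ^ 2 - 12 * x p ^ 2) := by
  set S := ∑ j, x j ^ 2 with hS
  have hφ : ∀ k, x k ≠ x p → S - 4 * (x p ^ 2 + x p * x k + x k ^ 2) = 0 := fun k hk =>
    sub_eq_zero.mpr (((gradF_eq_gradF_iff x p k).mp ((hc p).trans (hc k).symm)).resolve_left
      (Ne.symm hk))
  calc (#{k | x k = x p} : ℂ) * (S - 12 * x p ^ 2)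
      = ∑ k, (S - 4 * (x p ^ 2 + x p * x k + x k ^ 2)) := by
        rw [sum_comp_eq_card_fiber_nsmul x (fun t => S - 4 * (x p ^ 2 + x p * t + t ^ 2)) _ hφ,
          nsmul_eq_mul]
        ring
    _ = 2 * (S - 12 * x p ^ 2) := by
        simp only [mul_add, sum_sub_distrib, sum_add_distrib, ← mul_sum, sum_const, card_univ,
          Fintype.card_fin, hsum, nsmul_eq_mul, ← hS]
        ring

theorem card_fiber_eq_two (p : Fin 6) (h : ∑ j, x j ^ 2 ≠ 12 * x p ^ 2) :
    #{k | x k = x p} = 2 := by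
  exact_mod_cast mul_right_cancel₀ (sub_ne_zero.mpr h) (card_fiber_mul_eq hc hsum p)

theorem card_fiber_eq_four (hx0 : x ≠ 0) (p : Fin 6) (h : ∑ j, x j ^ 2 = 12 * x p ^ 2) :
    #{k | x k = x p} = 4 := by
  have hval : ∀ k, x k ≠ x p → x k + 2 * x p = 0 := fun k hk => by
    have hrel := ((gradF_eq_gradF_iff x p k).mp ((hc p).trans (hc k).symm)).resolve_left
      (Ne.symm hk)
    have : (x k - x p) * (x k + 2 * x p) = 0 := by linear_combination (h - hrel) / 4
    exact (mul_eq_zero.mp this).resolve_left (sub_ne_zero.mpr hk)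
  have hp : x p ≠ 0 := fun hp => hx0 <| funext fun k => by
    by_cases hk : x k = x p
    · rw [hk, hp, Pi.zero_apply]
    · simpa [hp] using hval k hk
  have hcount : (#{k | x k = x p} : ℂ) * (3 * x p) = 12 * x p :=
    calc (#{k | x k = x p} : ℂ) * (3 * x p) = ∑ k, (x k + 2 * x p) := by
          rw [sum_comp_eq_card_fiber_nsmul x (· + 2 * x p) _ hval, nsmul_eq_mul]; ring
      _ = 12 * x p := by
          simp only [sum_add_distrib, hsum, sum_const, card_univ, Fintype.card_fin, nsmul_eq_mul]
          ring
  have h4 : (#{k | x k = x p} : ℂ) * x p = 4 * x p := by linear_combination hcount / 3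
  exact_mod_cast mul_right_cancel₀ hp h4

theorem even_card_fiber (hx0 : x ≠ 0) (a : ℂ) : Even #{k | x k = a} := by
  by_cases ha : ∃ p, x p = a
  · obtain ⟨p, rfl⟩ := ha
    by_cases h : ∑ j, x j ^ 2 = 12 * x p ^ 2
    · rw [card_fiber_eq_four hc hsum hx0 p h]
      exact ⟨2, rfl⟩
    · rw [card_fiber_eq_two hc hsum p h]
      exact even_two
  · rw [filter_false_of_mem fun k _ hk => ha ⟨k, hk⟩, card_empty]
    exact .zero

theorem exists_fpf_of_gradF_eq (hx0 : x ≠ 0) :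
    ∃ τ : Equiv.Perm (Fin 6), FPF τ ∧ ∀ k, x k = x (τ k) := by
  obtain ⟨τ, hinv, hfree, hτ⟩ :=
    exists_involutive_fixedPointFree_comp_eq x (even_card_fiber hc hsum hx0)
  exact ⟨τ, ⟨hinv, hfree⟩, fun k => (hτ k).symm⟩

end Singular

section Invariant

variable {τ : Equiv.Perm (Fin 6)} (hτ : FPF τ) (hx : ∀ k, x k = x (τ k)) (hsum : ∑ k, x k = 0)
include hτ hx hsum

theorem sum_sq_eq_of_invariant {p q : Fin 6} (hpq : x p ≠ x q) :
    ∑ j, x j ^ 2 = 4 * (x p ^ 2 + x p * x q + x q ^ 2) := by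
  obtain ⟨r, hr⟩ := exists_sum_eq_two_nsmul_of_card_eq_six ℂ (Fintype.card_fin 6) hτ.1 hτ.2
    (p := p) (q := q) (by rintro rfl; exact hpq rfl) (by rintro rfl; exact hpq (hx p))
  have h1 := hr x fun k => (hx k).symm
  have h2 := hr (fun k => x k ^ 2) fun k => by rw [← hx k]
  rw [hsum, two_nsmul] at h1
  rw [two_nsmul] at h2
  linear_combination h2 - (x r - x p - x q) * h1

theorem gradF_eq_of_invariant (k : Fin 6) : gradF x k = gradF x 0 :=
  (gradF_eq_gradF_iff x k 0).mpr (or_iff_not_imp_left.mpr (sum_sq_eq_of_invariant hτ hx hsum))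

end Invariant

end

/-- the singular locus of the Castelnuovo–Richmond quartic is the union of
the 15 lines `L_τ`: a point `[x]` of `CR₄` is singular (i.e. `∇F(x)` is a scalar multiple
of `(1,…,1)`) iff `x k = x (τ k)` for some fixed-point-free involution `τ`; in particular
each line `L_τ` is contained in `CR₄` and consists of singular points of `CR₄`. -/
theorem CR_quartic_singular_locus :
    (∀ x : Fin 6 → ℂ, x ≠ 0 → (∑ k, x k) = 0 → Fq x = 0 →
      ((∃ c : ℂ, ∀ k, gradF x k = c) ↔
        ∃ τ : Equiv.Perm (Fin 6), FPF τ ∧ ∀ k, x k = x (τ k))) ∧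
    (∀ τ : Equiv.Perm (Fin 6), FPF τ → ∀ x ∈ lineL τ, x ≠ 0 →
      Fq x = 0 ∧ ∃ c : ℂ, ∀ k, gradF x k = c) := by
  refine ⟨fun x hx0 hsum _ => ⟨fun ⟨c, hc⟩ => exists_fpf_of_gradF_eq hc hsum hx0,
    fun ⟨τ, hτ, hx⟩ => ⟨_, gradF_eq_of_invariant hτ hx hsum⟩⟩, ?_⟩
  rintro τ hτ x ⟨hx, hsum⟩ -
  have hc := gradF_eq_of_invariant hτ hx hsum
  exact ⟨Fq_eq_zero_of_gradF_eq hc hsum, _, hc⟩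
end

section
/- For a 2-element subset B ⊆ {0,…,5}, let q_B ∈ P⁵ be the class of the vector with coordinates −2 on B and 1 off B (these are 15 distinct points, the S₆-orbit of [1:1:1:1:−2:−2]). For distinct fixed-point-free involutions τ ≠ τ′ of {0,…,5}, the lines L_τ and L_{τ′} meet if and only if τ and τ′ have a common 2-cycle B, in which case L_τ ∩ L_{τ′} = {q_B}. Each line L_τ contains exactly 3 of the points q_B (those with B a 2-cycle of τ), and each point q_B lies on exactly 3 of the 15 lines; i.e., the lines and points form the Cremona–Richmond (15₃,15₃)-configuration. -/
set_option maxRecDepth 100000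


open scoped BigOperators

/-- The vector with coordinates `-2` on `B` and `1` off `B`. -/
noncomputable def qvec (B : Finset (Fin 6)) : Fin 6 → ℂ := fun k => if k ∈ B then -2 else 1

lemma qvec_ne_zero (B : Finset (Fin 6)) : qvec B ≠ 0 := by
  intro h
  have h0 := congrFun h 0
  simp only [qvec, Pi.zero_apply] at h0
  split at h0
  · exact (neg_ne_zero.mpr (two_ne_zero (α := ℂ))) h0
  · exact one_ne_zero h0

/-- `B` is a 2-cycle of the permutation `τ`. -/
def IsTwoCycle (τ : Equiv.Perm (Fin 6)) (B : Finset (Fin 6)) : Prop :=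
  ∃ i : Fin 6, B = {i, τ i}

instance (τ : Equiv.Perm (Fin 6)) (B : Finset (Fin 6)) : Decidable (IsTwoCycle τ B) := by
  unfold IsTwoCycle; infer_instance

instance (τ : Equiv.Perm (Fin 6)) : Decidable (FPF τ) := by
  unfold FPF; infer_instance

lemma mem_lineL {τ : Equiv.Perm (Fin 6)} {x : Fin 6 → ℂ} :
    x ∈ lineL τ ↔ (∀ k, x k = x (τ k)) ∧ (∑ k, x k) = 0 := Iff.rfl

lemma twoCycle_inv {τ : Equiv.Perm (Fin 6)} (hτ : FPF τ) {B : Finset (Fin 6)}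
    (hB : IsTwoCycle τ B) : ∀ k, k ∈ B ↔ τ k ∈ B := by
  obtain ⟨i, rfl⟩ := hB
  intro k
  simp only [Finset.mem_insert, Finset.mem_singleton]
  constructor
  · rintro (rfl | rfl)
    · right; rfl
    · left; exact hτ.1 i
  · rintro (h | h)
    · right; rw [← h, hτ.1]
    · left; exact τ.injective h

lemma twoCycle_other {τ : Equiv.Perm (Fin 6)} (hτ : FPF τ) {B : Finset (Fin 6)}
    (hB : IsTwoCycle τ B) {m e : Fin 6} (hm : m ∈ B) (he : e ∈ B) (hne : e ≠ m) : e = τ m := by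
  obtain ⟨i, rfl⟩ := hB
  simp only [Finset.mem_insert, Finset.mem_singleton] at hm he
  rcases hm with hm | hm <;> rcases he with he | he
  · exact absurd (he.trans hm.symm) hne
  · rw [he, hm]
  · rw [he, hm]; exact (hτ.1 i).symm
  · exact absurd (he.trans hm.symm) hne

lemma twoCycle_card {τ : Equiv.Perm (Fin 6)} (hτ : FPF τ) {B : Finset (Fin 6)}
    (hB : IsTwoCycle τ B) : B.card = 2 := by
  obtain ⟨i, rfl⟩ := hB
  exact Finset.card_pair (Ne.symm (hτ.2 i))

lemma qvec_sum {B : Finset (Fin 6)} (hB : B.card = 2) : ∑ k, qvec B k = 0 := by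
  rw [← Finset.sum_add_sum_compl B]
  have e1 : ∑ k ∈ B, qvec B k = 2 • (-2 : ℂ) := by
    rw [Finset.sum_congr rfl (fun k hk => show qvec B k = -2 from if_pos hk),
      Finset.sum_const, hB]
  have e2 : ∑ k ∈ Bᶜ, qvec B k = 4 • (1 : ℂ) := by
    rw [Finset.sum_congr rfl
        (fun k hk => show qvec B k = 1 from if_neg (Finset.mem_compl.mp hk)),
      Finset.sum_const, Finset.card_compl, hB, Fintype.card_fin]
  rw [e1, e2]
  norm_num

lemma qvec_mem_lineL_iff {τ : Equiv.Perm (Fin 6)} (hτ : FPF τ) {B : Finset (Fin 6)}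
    (hB : B.card = 2) : qvec B ∈ lineL τ ↔ IsTwoCycle τ B := by
  rw [mem_lineL]
  constructor
  · rintro ⟨h1, -⟩
    have inv : ∀ k, k ∈ B → τ k ∈ B := by
      intro k hk
      by_contra hk2
      have hk1 := h1 k
      simp only [qvec, if_pos hk, if_neg hk2] at hk1
      norm_num at hk1
    obtain ⟨i, hi⟩ := Finset.card_pos.mp (by rw [hB]; norm_num)
    have hsub : ({i, τ i} : Finset (Fin 6)) ⊆ B := by
      intro x hx
      simp only [Finset.mem_insert, Finset.mem_singleton] at hx
      rcases hx with rfl | rfl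
      · exact hi
      · exact inv i hi
    exact ⟨i, (Finset.eq_of_subset_of_card_le hsub
      (by rw [hB, Finset.card_pair (Ne.symm (hτ.2 i))])).symm⟩
  · intro h2c
    refine ⟨fun k => ?_, qvec_sum hB⟩
    have hiff := twoCycle_inv hτ h2c k
    simp only [qvec]
    by_cases hk : k ∈ B
    · rw [if_pos hk, if_pos (hiff.mp hk)]
    · rw [if_neg hk, if_neg (fun h => hk (hiff.mpr h))]

lemma eq_on_twoCycle {τ τ' : Equiv.Perm (Fin 6)} (hτ : FPF τ) (hτ' : FPF τ')
    {B : Finset (Fin 6)} (h1 : IsTwoCycle τ B) (h2 : IsTwoCycle τ' B) :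
    ∀ m ∈ B, τ m = τ' m := by
  intro m hm
  exact twoCycle_other hτ' h2 hm ((twoCycle_inv hτ h1 m).mp hm) (hτ.2 m)

lemma shared_two_cycles_eq {τ τ' : Equiv.Perm (Fin 6)} (hτ : FPF τ) (hτ' : FPF τ')
    {B B' : Finset (Fin 6)} (h1 : IsTwoCycle τ B) (h2 : IsTwoCycle τ' B)
    (h1' : IsTwoCycle τ B') (h2' : IsTwoCycle τ' B') (hdisj : Disjoint B B') : τ = τ' := by
  apply Equiv.ext
  intro m
  by_cases hmB : m ∈ B
  · exact eq_on_twoCycle hτ hτ' h1 h2 m hmB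
  by_cases hmB' : m ∈ B'
  · exact eq_on_twoCycle hτ hτ' h1' h2' m hmB'
  set C := (B ∪ B')ᶜ with hC
  have hmC : m ∈ C := by
    simp only [hC, Finset.mem_compl, Finset.mem_union, not_or]
    exact ⟨hmB, hmB'⟩
  have hCcard : C.card = 2 := by
    rw [hC, Finset.card_compl, Finset.card_union_of_disjoint hdisj,
      twoCycle_card hτ h1, twoCycle_card hτ h1', Fintype.card_fin]
  have hinv : ∀ k ∈ C, τ k ∈ C ∧ τ' k ∈ C := by
    intro k hk
    simp only [hC, Finset.mem_compl, Finset.mem_union, not_or] at hk ⊢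
    obtain ⟨hk1, hk2⟩ := hk
    exact ⟨⟨fun h => hk1 ((twoCycle_inv hτ h1 k).mpr h),
            fun h => hk2 ((twoCycle_inv hτ h1' k).mpr h)⟩,
           ⟨fun h => hk1 ((twoCycle_inv hτ' h2 k).mpr h),
            fun h => hk2 ((twoCycle_inv hτ' h2' k).mpr h)⟩⟩
  have h3 : τ m ∈ C := (hinv m hmC).1
  have h4 : τ' m ∈ C := (hinv m hmC).2
  obtain ⟨a, b, hab, hCeq⟩ := Finset.card_eq_two.mp hCcard
  rw [hCeq] at hmC h3 h4
  simp only [Finset.mem_insert, Finset.mem_singleton] at hmC h3 h4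
  rcases hmC with rfl | rfl
  · rcases h3 with h3 | h3
    · exact absurd h3 (hτ.2 m)
    · rcases h4 with h4 | h4
      · exact absurd h4 (hτ'.2 m)
      · rw [h3, h4]
  · rcases h3 with h3 | h3
    · rcases h4 with h4 | h4
      · rw [h3, h4]
      · exact absurd h4 (hτ'.2 m)
    · exact absurd h3 (hτ.2 m)

lemma closure_card {τ τ' : Equiv.Perm (Fin 6)} (hτ : FPF τ) (hτ' : FPF τ')
    (S : Finset (Fin 6)) (hcl : ∀ k ∈ S, τ k ∈ S ∧ τ' k ∈ S)
    (hne : ∀ k ∈ S, τ k ≠ τ' k) {k0 : Fin 6} (hk0 : k0 ∈ S) : 4 ≤ S.card := by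
  have h1 := (hcl k0 hk0).1
  have h2 := (hcl k0 hk0).2
  have h3 := (hcl _ h2).1
  have d1 : τ k0 ≠ k0 := hτ.2 k0
  have d2 : τ' k0 ≠ k0 := hτ'.2 k0
  have d3 : τ k0 ≠ τ' k0 := hne k0 hk0
  have d4 : τ (τ' k0) ≠ k0 := by
    intro h
    have := congrArg τ h
    rw [hτ.1] at this
    exact d3 this.symm
  have d5 : τ (τ' k0) ≠ τ k0 := fun h => d2 (τ.injective h)
  have d6 : τ (τ' k0) ≠ τ' k0 := hτ.2 (τ' k0)
  have hsub : ({k0, τ k0, τ' k0, τ (τ' k0)} : Finset (Fin 6)) ⊆ S := by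
    intro x hx
    simp only [Finset.mem_insert, Finset.mem_singleton] at hx
    rcases hx with rfl | rfl | rfl | rfl <;> assumption
  have hcard : ({k0, τ k0, τ' k0, τ (τ' k0)} : Finset (Fin 6)).card = 4 := by
    rw [Finset.card_insert_of_notMem (by simp [Ne.symm d1, Ne.symm d2, Ne.symm d4]),
      Finset.card_insert_of_notMem (by simp [d3, Ne.symm d5]),
      Finset.card_insert_of_notMem (by simp [Ne.symm d6]), Finset.card_singleton]
  calc 4 = ({k0, τ k0, τ' k0, τ (τ' k0)} : Finset (Fin 6)).card := hcard.symm
    _ ≤ S.card := Finset.card_le_card hsub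

lemma inf_eq_bot {τ τ' : Equiv.Perm (Fin 6)} (hτ : FPF τ) (hτ' : FPF τ')
    (hno : ∀ i, τ i ≠ τ' i) : lineL τ ⊓ lineL τ' = ⊥ := by
  rw [eq_bot_iff]
  rintro x ⟨⟨hx1, hxs⟩, ⟨hx1', -⟩⟩
  have hconst : ∀ k, x k = x 0 := by
    by_contra hc
    push_neg at hc
    obtain ⟨k1, hk1⟩ := hc
    have hScl : ∀ k ∈ Finset.univ.filter (fun k => x k = x 0),
        τ k ∈ Finset.univ.filter (fun k => x k = x 0) ∧
        τ' k ∈ Finset.univ.filter (fun k => x k = x 0) := by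
      intro k hk
      simp only [Finset.mem_filter, Finset.mem_univ, true_and] at hk ⊢
      exact ⟨(hx1 k).symm.trans hk, (hx1' k).symm.trans hk⟩
    have hTcl : ∀ k ∈ Finset.univ.filter (fun k => ¬ x k = x 0),
        τ k ∈ Finset.univ.filter (fun k => ¬ x k = x 0) ∧
        τ' k ∈ Finset.univ.filter (fun k => ¬ x k = x 0) := by
      intro k hk
      simp only [Finset.mem_filter, Finset.mem_univ, true_and] at hk ⊢
      exact ⟨fun h => hk ((hx1 k).trans h), fun h => hk ((hx1' k).trans h)⟩
    have c1 : 4 ≤ (Finset.univ.filter (fun k => x k = x 0)).card :=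
      closure_card hτ hτ' _ hScl (fun k _ => hno k) (k0 := 0)
        (by simp only [Finset.mem_filter, Finset.mem_univ, true_and])
    have c2 : 4 ≤ (Finset.univ.filter (fun k => ¬ x k = x 0)).card :=
      closure_card hτ hτ' _ hTcl (fun k _ => hno k) (k0 := k1)
        (by simp only [Finset.mem_filter, Finset.mem_univ, true_and]; exact hk1)
    have hsum := Finset.card_filter_add_card_filter_not
      (s := (Finset.univ : Finset (Fin 6))) (p := fun k => x k = x 0)
    simp only [Finset.card_univ, Fintype.card_fin] at hsum
    omega
  have h6 : (6 : ℂ) * x 0 = 0 := by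
    calc (6 : ℂ) * x 0 = ∑ _k : Fin 6, x 0 := by
          rw [Finset.sum_const, Finset.card_univ, Fintype.card_fin]
          norm_num
      _ = ∑ k, x k := Finset.sum_congr rfl fun k _ => (hconst k).symm
      _ = 0 := hxs
  have h0 : x 0 = 0 := by
    rcases mul_eq_zero.mp h6 with h | h
    · norm_num at h
    · exact h
  simp only [Submodule.mem_bot]
  funext k
  rw [hconst k, h0]
  rfl

lemma inf_eq_span {τ τ' : Equiv.Perm (Fin 6)} (hτ : FPF τ) (hτ' : FPF τ') (hττ' : τ ≠ τ')
    {B : Finset (Fin 6)} (h1 : IsTwoCycle τ B) (h2 : IsTwoCycle τ' B) :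
    lineL τ ⊓ lineL τ' = Submodule.span ℂ {qvec B} := by
  have hB2 : B.card = 2 := twoCycle_card hτ h1
  apply le_antisymm
  · rintro x ⟨⟨hx1, hxs⟩, ⟨hx1', -⟩⟩
    have hne : ∀ k, k ∉ B → τ k ≠ τ' k := by
      intro k hkB heq
      apply hττ'
      have hτkB : τ k ∉ B := fun h => hkB ((twoCycle_inv hτ h1 k).mpr h)
      have hd : Disjoint B ({k, τ k} : Finset (Fin 6)) := by
        rw [Finset.disjoint_right]
        intro a ha
        simp only [Finset.mem_insert, Finset.mem_singleton] at ha
        rcases ha with rfl | rfl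
        · exact hkB
        · exact hτkB
      exact shared_two_cycles_eq hτ hτ' h1 h2 ⟨k, rfl⟩ ⟨k, by rw [heq]⟩ hd
    have hBc : (Bᶜ : Finset (Fin 6)).card = 4 := by
      rw [Finset.card_compl, hB2, Fintype.card_fin]
    obtain ⟨j, hj⟩ := Finset.card_pos.mp (by rw [hBc]; norm_num : 0 < (Bᶜ : Finset (Fin 6)).card)
    have hjB : j ∉ B := Finset.mem_compl.mp hj
    have hScl : ∀ k ∈ Bᶜ.filter (fun k => x k = x j),
        τ k ∈ Bᶜ.filter (fun k => x k = x j) ∧ τ' k ∈ Bᶜ.filter (fun k => x k = x j) := by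
      intro k hk
      simp only [Finset.mem_filter, Finset.mem_compl] at hk ⊢
      obtain ⟨hk1, hk2⟩ := hk
      exact ⟨⟨fun h => hk1 ((twoCycle_inv hτ h1 k).mpr h), (hx1 k).symm.trans hk2⟩,
             ⟨fun h => hk1 ((twoCycle_inv hτ' h2 k).mpr h), (hx1' k).symm.trans hk2⟩⟩
    have hSne : ∀ k ∈ Bᶜ.filter (fun k => x k = x j), τ k ≠ τ' k :=
      fun k hk => hne k (Finset.mem_compl.mp (Finset.mem_filter.mp hk).1)
    have hjS : j ∈ Bᶜ.filter (fun k => x k = x j) := Finset.mem_filter.mpr ⟨hj, rfl⟩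
    have hS4 : 4 ≤ (Bᶜ.filter (fun k => x k = x j)).card :=
      closure_card hτ hτ' _ hScl hSne hjS
    have hSeq : Bᶜ.filter (fun k => x k = x j) = Bᶜ :=
      Finset.eq_of_subset_of_card_le (Finset.filter_subset _ _) (hBc ▸ hS4)
    have hoff : ∀ k, k ∉ B → x k = x j := by
      intro k hk
      have hmem : k ∈ Bᶜ := Finset.mem_compl.mpr hk
      rw [← hSeq] at hmem
      exact (Finset.mem_filter.mp hmem).2
    obtain ⟨i, hBi⟩ := h1
    have hon : ∀ k ∈ B, x k = x i := by
      intro k hk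
      rw [hBi] at hk
      simp only [Finset.mem_insert, Finset.mem_singleton] at hk
      rcases hk with rfl | rfl
      · rfl
      · exact (hx1 i).symm
    have hsum : 2 * x i + 4 * x j = 0 := by
      rw [← Finset.sum_add_sum_compl B] at hxs
      have e1 : ∑ k ∈ B, x k = 2 * x i := by
        rw [Finset.sum_congr rfl hon, Finset.sum_const, hB2]
        norm_num
      have e2 : ∑ k ∈ Bᶜ, x k = 4 * x j := by
        rw [Finset.sum_congr rfl (fun k hk => hoff k (Finset.mem_compl.mp hk)),
          Finset.sum_const, hBc]
        norm_num
      rw [e1, e2] at hxs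
      exact hxs
    have hxi : x i = -2 * x j := by linear_combination hsum / 2
    refine Submodule.mem_span_singleton.mpr ⟨x j, ?_⟩
    funext k
    simp only [Pi.smul_apply, qvec, smul_eq_mul]
    by_cases hk : k ∈ B
    · rw [if_pos hk, hon k hk, hxi]; ring
    · rw [if_neg hk, hoff k hk]; ring
  · rw [Submodule.span_le, Set.singleton_subset_iff, SetLike.mem_coe]
    exact Submodule.mem_inf.mpr
      ⟨(qvec_mem_lineL_iff hτ hB2).mpr h1, (qvec_mem_lineL_iff hτ' hB2).mpr h2⟩

lemma count_B : ∀ τ : Equiv.Perm (Fin 6), FPF τ →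
    (Finset.univ.filter (fun B : Finset (Fin 6) => B.card = 2 ∧ IsTwoCycle τ B)).card = 3 := by
  decide

lemma count_tau : ∀ B : Finset (Fin 6), B.card = 2 →
    (Finset.univ.filter (fun τ : Equiv.Perm (Fin 6) => FPF τ ∧ IsTwoCycle τ B)).card = 3 := by
  decide

/-- the Cremona–Richmond `(15₃,15₃)`-configuration.  The points `q_B`
(for 2-element subsets `B`) are 15 distinct points; two distinct singular lines
`L_τ, L_{τ'}` of `CR₄` meet iff `τ` and `τ'` have a common 2-cycle `B`, in which case
they meet exactly at `q_B`; each line `L_τ` contains exactly 3 of the points `q_B`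
(those with `B` a 2-cycle of `τ`), and each `q_B` lies on exactly 3 of the 15 lines. -/
theorem cremona_richmond_configuration :
    {B : Finset (Fin 6) | B.card = 2}.ncard = 15 ∧
    (∀ B B' : Finset (Fin 6), B.card = 2 → B'.card = 2 →
      Projectivization.mk ℂ (qvec B) (qvec_ne_zero B) =
        Projectivization.mk ℂ (qvec B') (qvec_ne_zero B') → B = B') ∧
    (∀ τ τ' : Equiv.Perm (Fin 6), FPF τ → FPF τ' → τ ≠ τ' →
      ((lineL τ ⊓ lineL τ' ≠ ⊥) ↔
        ∃ B : Finset (Fin 6), B.card = 2 ∧ IsTwoCycle τ B ∧ IsTwoCycle τ' B) ∧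
      ∀ B : Finset (Fin 6), B.card = 2 → IsTwoCycle τ B → IsTwoCycle τ' B →
        lineL τ ⊓ lineL τ' = Submodule.span ℂ {qvec B}) ∧
    (∀ τ : Equiv.Perm (Fin 6), FPF τ →
      (∀ B : Finset (Fin 6), B.card = 2 → (qvec B ∈ lineL τ ↔ IsTwoCycle τ B)) ∧
      {B : Finset (Fin 6) | B.card = 2 ∧ qvec B ∈ lineL τ}.ncard = 3) ∧
    (∀ B : Finset (Fin 6), B.card = 2 →
      {τ : Equiv.Perm (Fin 6) | FPF τ ∧ qvec B ∈ lineL τ}.ncard = 3) := by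
  refine ⟨?_, ?_, ?_, ?_, ?_⟩
  · -- 15 two-element subsets
    have h : {B : Finset (Fin 6) | B.card = 2} =
        ↑(Finset.univ.filter (fun B : Finset (Fin 6) => B.card = 2)) := by
      ext B; simp
    rw [h, Set.ncard_coe_finset]
    decide
  · -- injectivity of q
    intro B B' hB hB' h
    rw [Projectivization.mk_eq_mk_iff] at h
    obtain ⟨a, ha⟩ := h
    by_contra hne
    have hd1 : ∃ k, k ∈ B ∧ k ∉ B' := by
      by_contra hc
      push_neg at hc
      exact hne (Finset.eq_of_subset_of_card_le (fun k hk => hc k hk) (by rw [hB, hB']))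
    have hd2 : ∃ k, k ∈ B' ∧ k ∉ B := by
      by_contra hc
      push_neg at hc
      exact hne (Finset.eq_of_subset_of_card_le (fun k hk => hc k hk) (by rw [hB, hB'])).symm
    obtain ⟨k, hk1, hk2⟩ := hd1
    obtain ⟨k', hk1', hk2'⟩ := hd2
    have e1 := congrFun ha k
    have e2 := congrFun ha k'
    simp only [Pi.smul_apply, qvec, if_pos hk1, if_neg hk2, if_pos hk1', if_neg hk2',
      Units.smul_def, smul_eq_mul] at e1 e2
    rw [mul_one] at e1
    rw [e1] at e2
    norm_num at e2
  · -- intersections of lines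
    intro τ τ' hτ hτ' hd
    constructor
    · constructor
      · intro hbot
        by_contra hnoB
        apply hbot
        apply inf_eq_bot hτ hτ'
        intro i heq
        exact hnoB ⟨{i, τ i}, Finset.card_pair (Ne.symm (hτ.2 i)), ⟨i, rfl⟩, ⟨i, by rw [heq]⟩⟩
      · rintro ⟨B, hB2, h1, h2⟩
        rw [inf_eq_span hτ hτ' hd h1 h2]
        intro hsp
        exact qvec_ne_zero B (Submodule.span_singleton_eq_bot.mp hsp)
    · intro B _ h1 h2
      exact inf_eq_span hτ hτ' hd h1 h2
  · -- each line contains 3 points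
    intro τ hτ
    refine ⟨fun B hB => qvec_mem_lineL_iff hτ hB, ?_⟩
    have h : {B : Finset (Fin 6) | B.card = 2 ∧ qvec B ∈ lineL τ} =
        ↑(Finset.univ.filter (fun B : Finset (Fin 6) => B.card = 2 ∧ IsTwoCycle τ B)) := by
      ext B
      simp only [Set.mem_setOf_eq, Finset.coe_filter, Finset.mem_univ, true_and]
      constructor
      · rintro ⟨h2, hm⟩
        exact ⟨h2, (qvec_mem_lineL_iff hτ h2).mp hm⟩
      · rintro ⟨h2, ht⟩
        exact ⟨h2, (qvec_mem_lineL_iff hτ h2).mpr ht⟩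
    rw [h, Set.ncard_coe_finset]
    exact count_B τ hτ
  · -- each point lies on 3 lines
    intro B hB
    have h : {τ : Equiv.Perm (Fin 6) | FPF τ ∧ qvec B ∈ lineL τ} =
        ↑(Finset.univ.filter (fun τ : Equiv.Perm (Fin 6) => FPF τ ∧ IsTwoCycle τ B)) := by
      ext τ
      simp only [Set.mem_setOf_eq, Finset.coe_filter, Finset.mem_univ, true_and]
      constructor
      · rintro ⟨hτ, hm⟩
        exact ⟨hτ, (qvec_mem_lineL_iff hτ hB).mp hm⟩
      · rintro ⟨hτ, ht⟩
        exact ⟨hτ, (qvec_mem_lineL_iff hτ hB).mpr ht⟩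
    rw [h, Set.ncard_coe_finset]
    exact count_tau B hB
end

section
/- For every 3-element subset A ⊆ {0,…,5}, the polynomial (Σ_{k=0}^{5} X_k²)² − 4 Σ_{k=0}^{5} X_k⁴ + (Σ_{k=0}^{5} ε^A_k X_k²)² in ℂ[X₀,…,X₅] lies in the ideal generated by Σ_{k=0}^{5} X_k and Σ_{k=0}^{5} ε^A_k X_k. Hence the hyperplane {[x] : Σ_k ε^A_k x_k = 0} dual to the node [ε^A] intersects the Castelnuovo–Richmond quartic in the quadric {Σ_k ε^A_k x_k² = 0} taken with multiplicity two (a non-reduced quadric). -/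
open scoped BigOperators
open MvPolynomial

private lemma sum_split6 {M : Type*} [AddCommMonoid M] {i j k l m n : Fin 6}
    (hij : i ≠ j) (hik : i ≠ k) (hjk : j ≠ k)
    (hlm : l ≠ m) (hln : l ≠ n) (hmn : m ≠ n)
    (hc : ({i, j, k}ᶜ : Finset (Fin 6)) = {l, m, n}) (f : Fin 6 → M) :
    ∑ t, f t = f i + f j + f k + (f l + f m + f n) := by
  rw [← Finset.sum_add_sum_compl {i, j, k} f, hc]
  rw [Finset.sum_insert (by simp [hij, hik]), Finset.sum_insert (by simp [hjk]),
    Finset.sum_singleton, Finset.sum_insert (by simp [hlm, hln]),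
    Finset.sum_insert (by simp [hmn]), Finset.sum_singleton]
  abel

/-- for every 3-element subset `A ⊆ {0,…,5}` the polynomial
`(∑ X_k²)² - 4 ∑ X_k⁴ + (∑ ε^A_k X_k²)²` lies in the ideal generated by `∑ X_k` and
`∑ ε^A_k X_k`.  Hence on the hyperplane dual to the node `[ε^A]`, the
Castelnuovo–Richmond quartic is the quadric `{∑ ε^A_k x_k² = 0}` doubled. -/
theorem CR_quartic_node_hyperplane (A : Finset (Fin 6)) (hA : A.card = 3) :
    ((∑ k, (X k : MvPolynomial (Fin 6) ℂ) ^ 2) ^ 2 - 4 * (∑ k, (X k) ^ 4) +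
        (∑ k, C (eps A k) * (X k) ^ 2) ^ 2 ∈
      Ideal.span {(∑ k, X k : MvPolynomial (Fin 6) ℂ), ∑ k, C (eps A k) * X k}) ∧
    ∀ x : Fin 6 → ℂ, (∑ k, x k) = 0 → (∑ k, eps A k * x k) = 0 →
      (Fq x = 0 ↔ (∑ k, eps A k * (x k) ^ 2) = 0) := by
  obtain ⟨i, j, k, hij, hik, hjk, rfl⟩ := Finset.card_eq_three.mp hA
  have hccard : (({i, j, k} : Finset (Fin 6))ᶜ).card = 3 := by
    rw [Finset.card_compl, hA]; rfl
  obtain ⟨l, m, n, hlm, hln, hmn, hc⟩ := Finset.card_eq_three.mp hccard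
  have hiA : i ∈ ({i, j, k} : Finset (Fin 6)) := by simp
  have hjA : j ∈ ({i, j, k} : Finset (Fin 6)) := by simp
  have hkA : k ∈ ({i, j, k} : Finset (Fin 6)) := by simp
  have hlA : l ∉ ({i, j, k} : Finset (Fin 6)) := by
    rw [← Finset.mem_compl, hc]; simp
  have hmA : m ∉ ({i, j, k} : Finset (Fin 6)) := by
    rw [← Finset.mem_compl, hc]; simp
  have hnA : n ∉ ({i, j, k} : Finset (Fin 6)) := by
    rw [← Finset.mem_compl, hc]; simp
  have hmem : ((∑ t, (X t : MvPolynomial (Fin 6) ℂ) ^ 2) ^ 2 - 4 * (∑ t, (X t) ^ 4) +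
        (∑ t, C (eps {i, j, k} t) * (X t) ^ 2) ^ 2 ∈
      Ideal.span {(∑ t, X t : MvPolynomial (Fin 6) ℂ),
        ∑ t, C (eps {i, j, k} t) * X t}) := by
    simp only [sum_split6 hij hik hjk hlm hln hmn hc, eps, hiA, hjA, hkA, hlA, hmA, hnA,
      if_true, if_false, map_one, map_neg, one_mul, neg_one_mul]
    refine Ideal.mem_span_pair.mpr
      ⟨(-X i + X j + X k) * (X i - X j + X k) * (X i + X j - X k) +
        (-X l + X m + X n) * (X l - X m + X n) * (X l + X m - X n),
       (-X i + X j + X k) * (X i - X j + X k) * (X i + X j - X k) -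
        ((-X l + X m + X n) * (X l - X m + X n) * (X l + X m - X n)), by ring⟩
  refine ⟨hmem, ?_⟩
  intro x hs ht
  obtain ⟨u, v, huv⟩ := Ideal.mem_span_pair.mp hmem
  have h0 := congrArg (MvPolynomial.eval x) huv
  simp only [map_add, map_mul, map_sub, map_pow, map_sum, eval_X, eval_C, map_ofNat] at h0
  rw [hs, ht, mul_zero, mul_zero, add_zero] at h0
  have hQ : Fq x = -(∑ t, eps {i, j, k} t * (x t) ^ 2) ^ 2 := by
    unfold Fq; linear_combination -h0
  rw [hQ]
  constructor
  · intro h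
    exact pow_eq_zero_iff two_ne_zero |>.mp (neg_eq_zero.mp h)
  · intro h
    rw [h]; ring
end

section
/- Let y ∈ ℂ⁶ ∖ {0} with Σ_k y_k = 0 and (Σ_k y_k²)² = 4 Σ_k y_k⁴, and suppose Σ_k ε^A_k y_k ≠ 0 for every 3-element subset A ⊆ {0,…,5} (i.e. [y] lies on the Castelnuovo–Richmond quartic but on none of the 10 hyperplanes dual to the nodes). Then the cubic surface Σ₃ ∩ H_y has exactly one singular point. -/
/-!
Write `p_m = ∑ y_k ^ m`. As `∑ y_k = 0`, the cubic `g = X³ - (p₂/4) X - p₃/6` is the polynomial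
part of `√(∏ (X - y_k))`, and the Castelnuovo–Richmond equation says exactly that
`g² - ∏ (X - y_k) = α + β X` is affine. Hence `s_k = g(y_k)` satisfies `s_k² = α + β y_k` and
`∑ s_k = ∑ y_k s_k = 0`, i.e. `s` is a singular point of `Σ₃ ∩ H_y`.

Conversely a singular point `x` satisfies `x_k² = a + b y_k` and `∑ x_k = ∑ y_k x_k = 0`. If
`b = 0` then `x = c ε^A` with `|A| = 3` and `y` lies on the hyperplane dual to the node `ε^A`.
Otherwise rescale `x` to `z` with `b = β`, so that `z_k² - s_k² = μ - α` is constant. If the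
constant is nonzero, `u = z + s` has nonzero entries and `∑ u = ∑ u³ = ∑ 1/u = 0`, so
`∏ (X - u_k)` is even: the `u_k` pair off as `±u`, paired indices carry equal `y_k`, and one index
from each pair gives a node hyperplane through `y`. If the constant is zero then `z_k = ±s_k`, and
on the smaller sign class `s` has vanishing sums `∑ s_k = ∑ y_k s_k = 0`, which forces `s = 0`
there; so `z = ±s`. Finally `s ≠ 0`: otherwise `α = β = 0`, and the same pairing argument
applies to `∏ (X - y_k) = g²`.
-/

open scoped BigOperators

/-- `p` is a singular point of the cubic surface `Σ₃ ∩ H_y` (Jacobian criterion). -/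
def SingOnSection (y : Fin 6 → ℂ) (p : Projectivization ℂ (Fin 6 → ℂ)) : Prop :=
  ∃ (x : Fin 6 → ℂ) (hx : x ≠ 0), p = Projectivization.mk ℂ x hx ∧
    (∑ k, x k) = 0 ∧ (∑ k, (x k) ^ 3) = 0 ∧ (∑ k, y k * x k) = 0 ∧
    ¬ LinearIndependent ℂ ![(1 : Fin 6 → ℂ), fun k => (x k) ^ 2, y]

open Finset Polynomial

theorem exists_two_nsmul_sum_eq_of_pairing {ι M : Type*} [DecidableEq ι] [AddCommMonoid M]
    (w : ι → M) (P : Finset ι → Prop)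
    (hP : ∀ S, P S → ∀ i ∈ S, ∃ j ∈ S.erase i, w j = w i ∧ P ((S.erase i).erase j))
    (S : Finset ι) (hS : P S) : ∃ B ⊆ S, 2 * #B = #S ∧ 2 • ∑ i ∈ B, w i = ∑ i ∈ S, w i := by
  induction S using Finset.strongInduction with
  | H S ih =>
    obtain rfl | ⟨i, hi⟩ := S.eq_empty_or_nonempty
    · exact ⟨∅, empty_subset _, rfl, by simp⟩
    obtain ⟨j, hj, hwj, hS'⟩ := hP S hS i hi
    have hsub : (S.erase i).erase j ⊂ S := (erase_ssubset hj).trans (erase_ssubset hi)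
    obtain ⟨B, hBS, hcard, hsum⟩ := ih _ hsub hS'
    have hiB : i ∉ B := fun h => by simpa using hBS h
    refine ⟨insert i B, insert_subset hi (hBS.trans hsub.subset), ?_, ?_⟩
    · rw [card_insert_of_notMem hiB, ← card_erase_add_one hi, ← card_erase_add_one hj]
      omega
    · rw [sum_insert hiB, ← add_sum_erase _ _ hi, ← add_sum_erase _ _ hj, ← hsum, hwj]
      abel

theorem exists_neg_of_prod_X_sub_C_eq_prod_X_add_C {K ι : Type*} [Field K] [CharZero K]
    [DecidableEq ι] {u : ι → K} {S : Finset ι} (hu : ∀ i ∈ S, u i ≠ 0)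
    (h : ∏ k ∈ S, (X - C (u k)) = ∏ k ∈ S, (X + C (u k))) {i : ι} (hi : i ∈ S) :
    ∃ j ∈ S.erase i, u j = -u i ∧
      ∏ k ∈ (S.erase i).erase j, (X - C (u k)) = ∏ k ∈ (S.erase i).erase j, (X + C (u k)) := by
  have hroot : ∏ k ∈ S, (u i + u k) = 0 := by
    simpa [eval_prod, prod_eq_zero hi] using (congrArg (eval (u i)) h).symm
  obtain ⟨j, hjS, hij⟩ := prod_eq_zero_iff.1 hroot
  have hji : j ≠ i := by
    rintro rfl
    exact hu j hjS (by linear_combination hij / 2)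
  have hj : j ∈ S.erase i := mem_erase.2 ⟨hji, hjS⟩
  have huj : u j = -u i := by linear_combination hij
  have split : ∀ f : ι → K[X], ∏ k ∈ S, f k = f i * f j * ∏ k ∈ (S.erase i).erase j, f k :=
    fun f => by rw [mul_assoc, mul_prod_erase _ f hj, mul_prod_erase _ f hi]
  have hpair : (X + C (u i)) * (X + C (u j)) = (X - C (u i)) * (X - C (u j)) := by
    rw [huj, map_neg]; ring
  rw [split, split, hpair] at h
  exact ⟨j, hj, huj, mul_left_cancel₀ (mul_ne_zero (X_sub_C_ne_zero _) (X_sub_C_ne_zero _)) h⟩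

theorem exists_eq_of_prod_X_sub_C_eq_sq {K ι : Type*} [Field K] [DecidableEq ι] {u : ι → K}
    {S : Finset ι} {p : K[X]} (h : ∏ k ∈ S, (X - C (u k)) = p ^ 2) {i : ι} (hi : i ∈ S) :
    ∃ j ∈ S.erase i, u j = u i ∧ ∃ q : K[X], ∏ k ∈ (S.erase i).erase j, (X - C (u k)) = q ^ 2 := by
  have hp : p.IsRoot (u i) := by
    simpa [eval_prod, prod_eq_zero hi] using (congrArg (eval (u i)) h).symm
  set q := p /ₘ (X - C (u i))
  have hpq : p = (X - C (u i)) * q := ((mul_divByMonic_eq_iff_isRoot).2 hp).symm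
  have hSi : ∏ k ∈ S.erase i, (X - C (u k)) = (X - C (u i)) * q ^ 2 := by
    refine mul_left_cancel₀ (X_sub_C_ne_zero (u i)) ?_
    rw [mul_prod_erase _ (fun k => X - C (u k)) hi, h, hpq]; ring
  have hroot : ∏ k ∈ S.erase i, (u i - u k) = 0 := by
    simpa [eval_prod] using congrArg (eval (u i)) hSi
  obtain ⟨j, hj, hij⟩ := prod_eq_zero_iff.1 hroot
  have huj : u j = u i := by linear_combination -hij
  refine ⟨j, hj, huj, q, mul_left_cancel₀ (X_sub_C_ne_zero (u i)) ?_⟩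
  rw [← hSi, ← huj, mul_prod_erase _ (fun k => X - C (u k)) hj]

theorem prod_sub_eq_prod_add {K : Type*} [Field K] [CharZero K] {u v : Fin 6 → K} {d : K}
    (hd : d ≠ 0) (huv : ∀ k, u k * v k = d) (hu : ∑ k, u k = 0) (hu3 : ∑ k, u k ^ 3 = 0)
    (hv : ∑ k, v k = 0) (T : K) : ∏ k, (T - u k) = ∏ k, (T + u k) := by
  simp only [Fin.sum_univ_six, Fin.prod_univ_six] at hu hu3 hv ⊢
  -- the fifth elementary symmetric function of `u` is `(∏ u) * ∑ 1/u`, and `1/u = v/d`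
  have he5 : u 1 * u 2 * u 3 * u 4 * u 5 + u 0 * u 2 * u 3 * u 4 * u 5
      + u 0 * u 1 * u 3 * u 4 * u 5 + u 0 * u 1 * u 2 * u 4 * u 5
      + u 0 * u 1 * u 2 * u 3 * u 5 + u 0 * u 1 * u 2 * u 3 * u 4 = 0 := by
    refine (mul_eq_zero.1 ?_).resolve_left hd
    linear_combination u 0 * u 1 * u 2 * u 3 * u 4 * u 5 * hv
      - u 1 * u 2 * u 3 * u 4 * u 5 * huv 0 - u 0 * u 2 * u 3 * u 4 * u 5 * huv 1
      - u 0 * u 1 * u 3 * u 4 * u 5 * huv 2 - u 0 * u 1 * u 2 * u 4 * u 5 * huv 3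
      - u 0 * u 1 * u 2 * u 3 * u 5 * huv 4 - u 0 * u 1 * u 2 * u 3 * u 4 * huv 5
  have h5 : u 5 = -(u 0 + u 1 + u 2 + u 3 + u 4) := by linear_combination hu
  rw [h5] at hu3 he5 ⊢
  linear_combination (-2 * T ^ 3 / 3) * hu3 - 2 * T * he5

section SmallSupport

variable {K ι : Type*} [Field K] [CharZero K] {y s : ι → K}

theorem eq_zero_of_add_eq_zero (hfib : ∀ i j, y i = y j → s i = s j) {i j : ι}
    (h1 : s i + s j = 0) (h2 : y i * s i + y j * s j = 0) : s i = 0 := by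
  by_cases hy : y i = y j
  · linear_combination (h1 + hfib i j hy) / 2
  · have : (y i - y j) * s i = 0 := by linear_combination h2 - y j * h1
    exact (mul_eq_zero.1 this).resolve_left (sub_ne_zero.2 hy)

theorem exists_eq_zero_of_sum_eq_zero [DecidableEq ι] {α β : K} (hsq : ∀ k, s k ^ 2 = α + β * y k)
    (hfib : ∀ i j, y i = y j → s i = s j) {S : Finset ι} (hne : S.Nonempty) (hS : #S ≤ 3)
    (h1 : ∑ k ∈ S, s k = 0) (h2 : ∑ k ∈ S, y k * s k = 0) : ∃ i ∈ S, s i = 0 := by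
  obtain h | h | h : #S = 1 ∨ #S = 2 ∨ #S = 3 := by have := hne.card_pos; omega
  · obtain ⟨a, rfl⟩ := card_eq_one.1 h
    exact ⟨a, mem_singleton_self a, by simpa using h1⟩
  · obtain ⟨a, b, hab, rfl⟩ := card_eq_two.1 h
    simp only [sum_pair hab] at h1 h2
    exact ⟨a, mem_insert_self a _, eq_zero_of_add_eq_zero hfib h1 h2⟩
  · obtain ⟨a, b, c, hab, hac, hbc, rfl⟩ := card_eq_three.1 h
    rw [sum_insert (by simp [hab, hac]), sum_pair hbc] at h1 h2
    -- `s³ = α s + β y s`, and `a + b + c = 0` forces `a³ + b³ + c³ = 3abc`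
    have hprod : s a * s b * s c = 0 := by
      linear_combination (s a * hsq a + s b * hsq b + s c * hsq c + α * h1 + β * h2
        - (s a ^ 2 + s b ^ 2 + s c ^ 2 - s a * s b - s b * s c - s a * s c) * h1) / 3
    simp only [mul_eq_zero] at hprod
    rcases hprod with (h | h) | h
    exacts [⟨a, by simp, h⟩, ⟨b, by simp, h⟩, ⟨c, by simp, h⟩]

theorem eq_zero_of_sum_eq_zero [DecidableEq ι] {α β : K} (hsq : ∀ k, s k ^ 2 = α + β * y k)
    (hfib : ∀ i j, y i = y j → s i = s j) {S : Finset ι} (hS : #S ≤ 3)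
    (h1 : ∑ k ∈ S, s k = 0) (h2 : ∑ k ∈ S, y k * s k = 0) : ∀ k ∈ S, s k = 0 := by
  induction S using Finset.strongInduction with
  | H S ih =>
    obtain rfl | hne := S.eq_empty_or_nonempty
    · simp
    obtain ⟨i, hi, hsi⟩ := exists_eq_zero_of_sum_eq_zero hsq hfib hne hS h1 h2
    have hrest := ih (S.erase i) (erase_ssubset hi) ((card_erase_le).trans hS)
      (by rwa [← add_sum_erase _ _ hi, hsi, zero_add] at h1)
      (by rwa [← add_sum_erase _ _ hi, hsi, mul_zero, zero_add] at h2)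
    intro k hk
    by_cases hki : k = i
    · rwa [hki]
    · exact hrest k (mem_erase.2 ⟨hki, hk⟩)

end SmallSupport

theorem sum_eps_mul (A : Finset (Fin 6)) (y : Fin 6 → ℂ) :
    ∑ k, eps A k * y k = 2 * ∑ k ∈ A, y k - ∑ k, y k := by
  have h : ∀ k, eps A k * y k = 2 * (if k ∈ A then y k else 0) - y k := by
    intro k; unfold eps; split_ifs <;> ring
  simp only [h, sum_sub_distrib, ← mul_sum, sum_ite_mem, univ_inter]

theorem sum_eps (A : Finset (Fin 6)) : ∑ k, eps A k = 2 * #A - 6 := by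
  simpa using sum_eps_mul A 1

theorem exists_sum_eps_mul_eq_zero_of_pairing {y : Fin 6 → ℂ} (P : Finset (Fin 6) → Prop)
    (hP : ∀ S, P S → ∀ i ∈ S, ∃ j ∈ S.erase i, y j = y i ∧ P ((S.erase i).erase j))
    (huniv : P univ) : ∃ A : Finset (Fin 6), A.card = 3 ∧ ∑ k, eps A k * y k = 0 := by
  obtain ⟨A, -, hcard, hsum⟩ := exists_two_nsmul_sum_eq_of_pairing y P hP univ huniv
  refine ⟨A, by simp at hcard; omega, ?_⟩
  rw [sum_eps_mul, ← hsum, two_nsmul, two_mul, sub_self]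

theorem eq_zero_and_eq_zero_of_add_mul_eq_zero {y : Fin 6 → ℂ} (hy : y ≠ 0)
    (hsum : ∑ k, y k = 0) {a b : ℂ} (h : ∀ k, a + b * y k = 0) : a = 0 ∧ b = 0 := by
  have hb : b = 0 := by
    by_contra hb
    have hconst : ∀ k, y k = -a / b := fun k => by field_simp; linear_combination h k
    have ha : -a / b = 0 := by simpa [hconst] using hsum
    exact hy (funext fun k => by rw [hconst k, ha, Pi.zero_apply])
  exact ⟨by simpa [hb] using h 0, hb⟩

theorem not_linearIndependent_iff_exists_sq_eq {y : Fin 6 → ℂ} (hy : y ≠ 0)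
    (hsum : ∑ k, y k = 0) (x : Fin 6 → ℂ) :
    ¬ LinearIndependent ℂ ![(1 : Fin 6 → ℂ), fun k => x k ^ 2, y] ↔
      ∃ a b : ℂ, ∀ k, x k ^ 2 = a + b * y k := by
  simp only [Fintype.not_linearIndependent_iff, Fin.sum_univ_three, funext_iff]
  constructor
  · rintro ⟨g, hg, i, hi⟩
    have hpt : ∀ k, g 0 + g 1 * x k ^ 2 + g 2 * y k = 0 := fun k => by simpa using hg k
    by_cases h1 : g 1 = 0
    · obtain ⟨h0, h2⟩ := eq_zero_and_eq_zero_of_add_mul_eq_zero hy hsum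
        fun k => by simpa [h1] using hpt k
      fin_cases i <;> simp_all
    · exact ⟨-g 0 / g 1, -g 2 / g 1, fun k => by field_simp; linear_combination hpt k⟩
  · rintro ⟨a, b, h⟩
    exact ⟨![a, -1, b], fun k => by simp [h k], 1, by simp⟩

def AvoidsNodeHyperplanes (y : Fin 6 → ℂ) : Prop :=
  ∀ A : Finset (Fin 6), A.card = 3 → ∑ k, eps A k * y k ≠ 0

/-- The equations of a singular point `x` of `Σ₃ ∩ H_y` once the Jacobian dependency is solved as
`x² = a + b y`; the cubic equation `∑ x_k³ = 0` is then automatic (`IsSingSol.sum_cube_eq_zero`). -/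
structure IsSingSol (y : Fin 6 → ℂ) (a b : ℂ) (x : Fin 6 → ℂ) : Prop where
  sum_eq_zero : ∑ k, x k = 0
  sum_mul_eq_zero : ∑ k, y k * x k = 0
  sq_eq : ∀ k, x k ^ 2 = a + b * y k

theorem exists_eq_mul_eps_of_sq_eq {x : Fin 6 → ℂ} (hx : ∀ k, x k ^ 2 = x 0 ^ 2) :
    ∃ A, x = fun k => x 0 * eps A k := by
  refine ⟨univ.filter fun k => x k = x 0, funext fun k => ?_⟩
  by_cases hk : x k = x 0
  · simp [eps, hk]
  · simp [eps, (sq_eq_sq_iff_eq_or_eq_neg.1 (hx k)).resolve_left hk]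

namespace IsSingSol

variable {y x s z : Fin 6 → ℂ} {a b α β μ : ℂ}

theorem sum_sq_mul_eq_zero (hx : IsSingSol y a b x) {w : Fin 6 → ℂ} (hw : ∑ k, w k = 0)
    (hyw : ∑ k, y k * w k = 0) : ∑ k, x k ^ 2 * w k = 0 := by
  simp only [hx.sq_eq, add_mul, mul_assoc, sum_add_distrib, ← mul_sum, hw, hyw, mul_zero,
    add_zero]

theorem sum_cube_eq_zero (hx : IsSingSol y a b x) : ∑ k, x k ^ 3 = 0 := by
  simpa [← pow_succ] using hx.sum_sq_mul_eq_zero hx.sum_eq_zero hx.sum_mul_eq_zero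

theorem smul (hx : IsSingSol y a b x) (t : ℂ) : IsSingSol y (t ^ 2 * a) (t ^ 2 * b) (t • x) where
  sum_eq_zero := by simp [← mul_sum, hx.sum_eq_zero]
  sum_mul_eq_zero := by simp [mul_left_comm _ t, ← mul_sum, hx.sum_mul_eq_zero]
  sq_eq k := by simp only [Pi.smul_apply, smul_eq_mul, mul_pow, hx.sq_eq]; ring

theorem eq_zero_of_slope_eq_zero (hnodes : AvoidsNodeHyperplanes y)
    (hx : IsSingSol y a 0 x) : x = 0 := by
  obtain ⟨c, A, rfl⟩ : ∃ c A, x = fun k => c * eps A k :=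
    ⟨x 0, exists_eq_mul_eps_of_sq_eq fun k => by simp [hx.sq_eq]⟩
  by_contra hx0
  have hc : c ≠ 0 := fun h => hx0 (funext fun k => by simp [h])
  have hcard : (2 : ℂ) * #A - 6 = 0 := by
    simpa [← mul_sum, hc, sum_eps] using hx.sum_eq_zero
  have hA : A.card = 3 := by
    have : (#A : ℂ) = 3 := by linear_combination hcard / 2
    exact_mod_cast this
  apply hnodes A hA
  have := hx.sum_mul_eq_zero
  simp only [mul_left_comm (y _), ← mul_sum] at this
  simpa [hc, mul_comm] using this

theorem eq_or_eq_neg_of_sq_eq_sq (hs : IsSingSol y α β s) (hfib : ∀ i j, y i = y j → s i = s j)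
    (hz : ∑ k, z k = 0) (hyz : ∑ k, y k * z k = 0) (hsq : ∀ k, z k ^ 2 = s k ^ 2) :
    z = s ∨ z = -s := by
  set P := univ.filter fun k => z k = s k
  have hzP : ∀ k, z k = eps P k * s k := fun k => by
    by_cases hk : z k = s k
    · simp [P, eps, hk]
    · simp [P, eps, (sq_eq_sq_iff_eq_or_eq_neg.1 (hsq k)).resolve_left hk]
  have hP : ∑ k ∈ P, s k = 0 := by
    have := sum_eps_mul P s
    rw [← sum_congr rfl fun k _ => hzP k, hz, hs.sum_eq_zero] at this
    linear_combination -this / 2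
  have hyP : ∑ k ∈ P, y k * s k = 0 := by
    have := sum_eps_mul P fun k => y k * s k
    rw [← sum_congr rfl fun k _ => show y k * z k = _ by rw [hzP k]; ring, hyz,
      hs.sum_mul_eq_zero] at this
    linear_combination -this / 2
  have hPc : ∑ k ∈ Pᶜ, s k = 0 := by
    rw [← add_right_inj (∑ k ∈ P, s k), sum_add_sum_compl, hP, hs.sum_eq_zero, add_zero]
  have hyPc : ∑ k ∈ Pᶜ, y k * s k = 0 := by
    rw [← add_right_inj (∑ k ∈ P, y k * s k), sum_add_sum_compl, hyP, hs.sum_mul_eq_zero,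
      add_zero]
  rcases le_or_gt #P 3 with hcard | hcard
  · have hvan := eq_zero_of_sum_eq_zero hs.sq_eq hfib hcard hP hyP
    refine Or.inr (funext fun k => ?_)
    by_cases hk : k ∈ P
    · simp [hzP k, hvan k hk]
    · simp [hzP k, eps, hk]
  · have hvan := eq_zero_of_sum_eq_zero hs.sq_eq hfib
      (by rw [card_compl, Fintype.card_fin]; omega) hPc hyPc
    refine Or.inl (funext fun k => ?_)
    by_cases hk : k ∈ P
    · simp [hzP k, eps, hk]
    · simp [hzP k, hvan k (mem_compl.2 hk)]

theorem sum_add_cube_eq_zero (hz : IsSingSol y μ β z) (hs : IsSingSol y α β s) :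
    ∑ k, (z k + s k) ^ 3 = 0 := by
  have h : ∀ k, (z k + s k) ^ 3 = z k ^ 2 * z k + 3 * (z k ^ 2 * s k) + 3 * (s k ^ 2 * z k)
      + s k ^ 2 * s k := fun k => by ring
  simp only [h, sum_add_distrib, ← mul_sum,
    hz.sum_sq_mul_eq_zero hz.sum_eq_zero hz.sum_mul_eq_zero,
    hz.sum_sq_mul_eq_zero hs.sum_eq_zero hs.sum_mul_eq_zero,
    hs.sum_sq_mul_eq_zero hz.sum_eq_zero hz.sum_mul_eq_zero,
    hs.sum_sq_mul_eq_zero hs.sum_eq_zero hs.sum_mul_eq_zero, mul_zero, add_zero]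

theorem const_eq (hnodes : AvoidsNodeHyperplanes y)
    (hβ : β ≠ 0) (hs : IsSingSol y α β s) (hz : IsSingSol y μ β z) : μ = α := by
  by_contra hd
  set u := z + s
  set v := z - s
  have huv : ∀ k, u k * v k = μ - α := fun k => by
    simp only [u, v, Pi.add_apply, Pi.sub_apply]
    linear_combination hz.sq_eq k - hs.sq_eq k
  have hu0 : ∀ k, u k ≠ 0 := fun k h => hd (by linear_combination -(huv k) + v k * h)
  have hprod : ∏ k, (X - C (u k)) = ∏ k, (X + C (u k)) := Polynomial.funext fun T => by
    simpa [eval_prod] using prod_sub_eq_prod_add (sub_ne_zero.2 hd) huv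
      (by simp [u, sum_add_distrib, hz.sum_eq_zero, hs.sum_eq_zero])
      (hz.sum_add_cube_eq_zero hs)
      (by simp [v, sum_sub_distrib, hz.sum_eq_zero, hs.sum_eq_zero]) T
  have hfib : ∀ i j, u j = -u i → y j = y i := fun i j hij => by
    have hv : v j = -v i := mul_left_cancel₀ (hu0 j) (by rw [huv, hij, neg_mul_neg, huv])
    have hsij : s j = -s i := by
      have : u j - v j = -(u i - v i) := by rw [hij, hv]; ring
      simp only [u, v, Pi.add_apply, Pi.sub_apply] at this
      linear_combination this / 2
    have : β * (y j - y i) = 0 := by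
      linear_combination hs.sq_eq i - hs.sq_eq j + (s j - s i) * hsij
    exact sub_eq_zero.1 ((mul_eq_zero.1 this).resolve_left hβ)
  obtain ⟨A, hA, hA0⟩ := exists_sum_eps_mul_eq_zero_of_pairing
    (fun S => (∀ i ∈ S, u i ≠ 0) ∧ ∏ k ∈ S, (X - C (u k)) = ∏ k ∈ S, (X + C (u k)))
    (fun S ⟨hS0, hS⟩ i hi => by
      obtain ⟨j, hj, hij, hS'⟩ := exists_neg_of_prod_X_sub_C_eq_prod_X_add_C hS0 hS hi
      exact ⟨j, hj, hfib i j hij,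
        fun k hk => hS0 k (mem_of_mem_erase (mem_of_mem_erase hk)), hS'⟩)
    ⟨fun k _ => hu0 k, hprod⟩
  exact hnodes A hA hA0

theorem exists_smul_eq (hnodes : AvoidsNodeHyperplanes y)
    (hβ : β ≠ 0) (hs : IsSingSol y α β s) (hfib : ∀ i j, y i = y j → s i = s j)
    (hx : IsSingSol y a b x) (hx0 : x ≠ 0) : ∃ c : ℂ, c • s = x := by
  have hb : b ≠ 0 := by
    rintro rfl
    exact hx0 (hx.eq_zero_of_slope_eq_zero hnodes)
  obtain ⟨t, ht⟩ := IsAlgClosed.exists_pow_nat_eq (β / b) two_pos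
  have htb : t ^ 2 * b = β := by rw [ht]; field_simp
  have ht0 : t ≠ 0 := by
    rintro rfl
    exact hβ (by simpa using htb.symm)
  have hz := hx.smul t
  rw [htb] at hz
  have hμ := hs.const_eq hnodes hβ hz
  rw [hμ] at hz
  rcases hs.eq_or_eq_neg_of_sq_eq_sq hfib hz.sum_eq_zero hz.sum_mul_eq_zero
    (fun k => by rw [hz.sq_eq, hs.sq_eq]) with h | h
  · exact ⟨t⁻¹, by rw [← h, smul_smul, inv_mul_cancel₀ ht0, one_smul]⟩
  · exact ⟨-t⁻¹, by rw [neg_smul, ← smul_neg, ← h, smul_smul, inv_mul_cancel₀ ht0, one_smul]⟩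

end IsSingSol

noncomputable def tangencyCubic (y : Fin 6 → ℂ) : ℂ[X] :=
  X ^ 3 - C ((∑ k, y k ^ 2) / 4) * X - C ((∑ k, y k ^ 3) / 6)

noncomputable def tangencyPoint (y : Fin 6 → ℂ) (k : Fin 6) : ℂ := (tangencyCubic y).eval (y k)

section Tangency

variable {y : Fin 6 → ℂ}

theorem exists_tangencyCubic_sq_eq (hsum : ∑ k, y k = 0)
    (hcr : (∑ k, y k ^ 2) ^ 2 = 4 * ∑ k, y k ^ 4) :
    ∃ α β : ℂ, tangencyCubic y ^ 2 = C α + C β * X + ∏ k, (X - C (y k)) := by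
  set D : ℂ → ℂ := fun T => (tangencyCubic y).eval T ^ 2 - ∏ k, (T - y k)
  refine ⟨D 0, D 1 - D 0, Polynomial.funext fun T => ?_⟩
  simp only [D, tangencyCubic, eval_pow, eval_add, eval_sub, eval_mul, eval_C, eval_X,
    Fin.sum_univ_six, Fin.prod_univ_six] at hsum hcr ⊢
  have h5 : y 5 = -(y 0 + y 1 + y 2 + y 3 + y 4) := by linear_combination hsum
  rw [h5] at hcr ⊢
  linear_combination (T - T ^ 2) / 16 * hcr

theorem tangencyPoint_sq {α β : ℂ}
    (hcubic : tangencyCubic y ^ 2 = C α + C β * X + ∏ k, (X - C (y k))) (k : Fin 6) :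
    tangencyPoint y k ^ 2 = α + β * y k := by
  simpa [tangencyPoint, eval_prod, prod_eq_zero (mem_univ k)] using congrArg (eval (y k)) hcubic

theorem isSingSol_tangencyPoint (hsum : ∑ k, y k = 0)
    (hcr : (∑ k, y k ^ 2) ^ 2 = 4 * ∑ k, y k ^ 4) {α β : ℂ}
    (hcubic : tangencyCubic y ^ 2 = C α + C β * X + ∏ k, (X - C (y k))) :
    IsSingSol y α β (tangencyPoint y) := by
  have h5 : y 5 = -(y 0 + y 1 + y 2 + y 3 + y 4) := by
    rw [Fin.sum_univ_six] at hsum; linear_combination hsum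
  refine ⟨?_, ?_, tangencyPoint_sq hcubic⟩
  · simp only [tangencyPoint, tangencyCubic, eval_sub, eval_pow, eval_mul, eval_C, eval_X,
      Fin.sum_univ_six]
    rw [h5]; ring
  · simp only [tangencyPoint, tangencyCubic, eval_sub, eval_pow, eval_mul, eval_C, eval_X,
      Fin.sum_univ_six] at hcr ⊢
    rw [h5] at hcr ⊢
    linear_combination (-1 / 4) * hcr

theorem tangencyPoint_ne_zero (hy : y ≠ 0) (hsum : ∑ k, y k = 0)
    (hnodes : AvoidsNodeHyperplanes y) {α β : ℂ}
    (hcubic : tangencyCubic y ^ 2 = C α + C β * X + ∏ k, (X - C (y k))) :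
    tangencyPoint y ≠ 0 := by
  intro h0
  obtain ⟨rfl, rfl⟩ : α = 0 ∧ β = 0 := eq_zero_and_eq_zero_of_add_mul_eq_zero hy hsum fun k => by
    rw [← tangencyPoint_sq hcubic, h0, Pi.zero_apply, sq, mul_zero]
  obtain ⟨A, hA, hA0⟩ := exists_sum_eps_mul_eq_zero_of_pairing
    (fun S => ∃ p : ℂ[X], ∏ k ∈ S, (X - C (y k)) = p ^ 2)
    (fun _ ⟨_, hS⟩ _ hi => exists_eq_of_prod_X_sub_C_eq_sq hS hi)
    ⟨tangencyCubic y, by simpa using hcubic.symm⟩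
  exact hnodes A hA hA0

end Tangency

/-- if `[y]` lies on the Castelnuovo–Richmond quartic but on none of the
10 hyperplanes dual to the nodes of the Segre cubic, then the cubic surface `Σ₃ ∩ H_y`
has exactly one singular point. -/
theorem tangent_section_one_singular_point (y : Fin 6 → ℂ) (hy : y ≠ 0)
    (hsum : (∑ k, y k) = 0)
    (hcr : (∑ k, (y k) ^ 2) ^ 2 = 4 * (∑ k, (y k) ^ 4))
    (hnodes : ∀ A : Finset (Fin 6), A.card = 3 → (∑ k, eps A k * y k) ≠ 0) :
    {p | SingOnSection y p}.ncard = 1 := by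
  obtain ⟨α, β, hcubic⟩ := exists_tangencyCubic_sq_eq hsum hcr
  have hs := isSingSol_tangencyPoint hsum hcr hcubic
  have hs0 := tangencyPoint_ne_zero hy hsum hnodes hcubic
  have hβ : β ≠ 0 := by
    rintro rfl
    exact hs0 (hs.eq_zero_of_slope_eq_zero hnodes)
  rw [Set.ncard_eq_one]
  refine ⟨Projectivization.mk ℂ _ hs0, Set.eq_singleton_iff_unique_mem.2 ⟨?_, ?_⟩⟩
  · exact ⟨_, hs0, rfl, hs.sum_eq_zero, hs.sum_cube_eq_zero, hs.sum_mul_eq_zero,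
      (not_linearIndependent_iff_exists_sq_eq hy hsum _).2 ⟨α, β, hs.sq_eq⟩⟩
  · rintro _ ⟨x, hx0, rfl, hx, -, hyx, hdep⟩
    obtain ⟨a, b, hab⟩ := (not_linearIndependent_iff_exists_sq_eq hy hsum x).1 hdep
    obtain ⟨c, rfl⟩ := hs.exists_smul_eq hnodes hβ (fun i j h => by simp [tangencyPoint, h])
      ⟨hx, hyx, hab⟩ hx0
    exact (Projectivization.mk_eq_mk_iff' ℂ _ _ hx0 hs0).2 ⟨c, rfl⟩
end
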